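/- arXiv:2505.08308 — 7 statements merged into one kernel-verified Lean document; each statement's English description precedes it below -/
import Mathlib

section
/- Smoothing Lemma: Let n, k, ℓ, a be positive integers with ℓ ≥ k and n ≥ a·ℓ·(k+1). If there exists an a-uniform (n,k,ℓ)-splitter F, then there exists a uniform (n,k,ℓ)-splitter F′ with |F′| ≤ (k+1)·|F|. -/
open Finset

/-- The number of elements of `[n]` mapped to `i` by `f`. -/
def preimCard {n ℓ : ℕ} (f : Fin n → Fin ℓ) (i : Fin ℓ) : ℕ :=
  (Finset.univ.filter fun x => f x = i).card

/-- The size of the image of `f`. -/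
def imageSize {n ℓ : ℕ} (f : Fin n → Fin ℓ) : ℕ :=
  (Finset.univ.image f).card

/-- An `(n,k,ℓ)`-splitter: for every `k`-subset `S` of `[n]` some `f` in the family
splits `S` as evenly as possible into the `ℓ` parts `f⁻¹(i) ∩ S`. -/
def IsSplitter (n k ℓ : ℕ) (F : Finset (Fin n → Fin ℓ)) : Prop :=
  ∀ S : Finset (Fin n), S.card = k → ∃ f ∈ F, ∀ i : Fin ℓ,
    k / ℓ ≤ (S.filter fun x => f x = i).card ∧
      (S.filter fun x => f x = i).card ≤ (k + ℓ - 1) / ℓ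

/-- A uniform family: each `f` has all preimages of elements of its image of size
`⌊n/|Im f|⌋` or `⌈n/|Im f|⌉`. -/
def IsUniformFamily (n ℓ : ℕ) (F : Finset (Fin n → Fin ℓ)) : Prop :=
  ∀ f ∈ F, ∀ i ∈ Finset.univ.image f,
    n / imageSize f ≤ preimCard f i ∧
      preimCard f i ≤ (n + imageSize f - 1) / imageSize f

/-- An `a`-uniform family: preimage sizes deviate by at most `a` from
`⌊n/|Im f|⌋`/`⌈n/|Im f|⌉`, and any two preimage sizes differ by at most `a`. -/
def IsAUniformFamily (n ℓ a : ℕ) (F : Finset (Fin n → Fin ℓ)) : Prop :=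
  ∀ f ∈ F,
    (∀ i ∈ Finset.univ.image f,
      n / imageSize f - a ≤ preimCard f i ∧
        preimCard f i ≤ (n + imageSize f - 1) / imageSize f + a) ∧
    (∀ i ∈ Finset.univ.image f, ∀ j ∈ Finset.univ.image f,
      |(preimCard f i : ℤ) - (preimCard f j : ℤ)| ≤ (a : ℤ))

/-- A strongly uniform family: for each `f` and every `i ∈ [ℓ]`,
`⌊n/ℓ⌋ ≤ |f⁻¹(i)| ≤ ⌈n/ℓ⌉`. -/
def IsStronglyUniformFamily (n ℓ : ℕ) (F : Finset (Fin n → Fin ℓ)) : Prop :=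
  ∀ f ∈ F, ∀ i : Fin ℓ, n / ℓ ≤ preimCard f i ∧ preimCard f i ≤ (n + ℓ - 1) / ℓ

/-! Fix `f ∈ F` with image `I` of size `m`, so `q = ⌊n/m⌋ ≥ a(k+1)` because `m ≤ ℓ`.
As fibre sizes differ by at most `a`, each fibre exceeds a balanced target size
`T i ∈ {q, q+1}` by at most `a`, hence contains `k+1` disjoint blocks of its excess size.
For each `t ≤ k`, keep `f` outside the blocks with index `t` and redistribute those points
to reach the sizes `T`: this gives `k+1` uniform functions. A `k`-set misses the blocks of
some index `t`, and the `t`-th function agrees with `f` on it, so it splits the set exactly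
as `f` does. -/

theorem Finset.exists_eqOn_compl_card_filter_eq {α ι : Type*} [DecidableEq α] [Fintype ι]
    [DecidableEq ι] (f : α → ι) (U : Finset α) (T : ι → ℕ) (hT : ∑ i, T i = #U) :
    ∃ g : α → ι, (∀ x ∉ U, g x = f x) ∧ ∀ i, #{x ∈ U | g x = i} = T i := by
  let e : U ≃ Σ i, Fin (T i) := Fintype.equivOfCardEq (by simp [hT])
  refine ⟨fun x => if hx : x ∈ U then (e ⟨x, hx⟩).1 else f x, fun x hx => dif_neg hx,
    fun i => ?_⟩
  calc #{x ∈ U | (if hx : x ∈ U then (e ⟨x, hx⟩).1 else f x) = i}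
      = ∑ x : U, if (e x).1 = i then 1 else 0 := by
        rw [card_filter, ← sum_coe_sort]
        exact Fintype.sum_congr _ _ fun x => by simp [x.2]
    _ = ∑ s : Σ j, Fin (T j), if s.1 = i then 1 else 0 :=
        e.sum_comp fun s => if s.1 = i then 1 else 0
    _ = T i := by rw [Fintype.sum_sigma]; simp [apply_ite]

theorem Finset.card_filter_add_card_filter_compl {α : Type*} [Fintype α] [DecidableEq α]
    (D : Finset α) (p : α → Prop) [DecidablePred p] :
    #{x ∈ D | p x} + #{x ∈ Dᶜ | p x} = #{x | p x} := by
  simp only [card_filter]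
  exact sum_add_sum_compl D _

theorem Finset.exists_eqOn_card_filter_eq {α ι : Type*} [Fintype α] [DecidableEq α]
    [Fintype ι] [DecidableEq ι] (f : α → ι) (D : Finset α) (T : ι → ℕ)
    (hT : ∑ i, T i = Fintype.card α) (hD : ∀ i, #{x ∈ D | f x = i} ≤ T i) :
    ∃ g : α → ι, (∀ x ∈ D, g x = f x) ∧ ∀ i, #{x | g x = i} = T i := by
  have hD_sum : ∑ i, #{x ∈ D | f x = i} = #D :=
    (card_eq_sum_card_fiberwise fun x _ => mem_univ (f x)).symm
  obtain ⟨g, hg_off, hg_card⟩ := Dᶜ.exists_eqOn_compl_card_filter_eq f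
    (fun i => T i - #{x ∈ D | f x = i})
    (by rw [sum_tsub_distrib _ fun i _ => hD i, hT, hD_sum, card_compl])
  refine ⟨g, fun x hx => hg_off x (notMem_compl.2 hx), fun i => ?_⟩
  have hg_D : #{x ∈ D | g x = i} = #{x ∈ D | f x = i} := by
    rw [filter_congr fun x hx => by rw [hg_off x (notMem_compl.2 hx)]]
  rw [← D.card_filter_add_card_filter_compl, hg_D, hg_card i]
  exact Nat.add_sub_cancel' (hD i)

theorem Finset.exists_labelling_card_filter_eq {α ι κ : Type*} [Fintype α] [DecidableEq α]
    [DecidableEq ι] [Fintype κ] [DecidableEq κ] (f : α → ι) (e : ι → ℕ)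
    (he : ∀ i, Fintype.card κ * e i ≤ #{x | f x = i}) :
    ∃ label : α → Option κ, ∀ i t, #{x | f x = i ∧ label x = some t} = e i := by
  have h_fiber (i : ι) :
      ∃ l : α → Option κ, ∀ t, #{x ∈ {x | f x = i} | l x = some t} = e i := by
    obtain ⟨l, -, hl⟩ := ({x | f x = i} : Finset α).exists_eqOn_compl_card_filter_eq
      (fun _ => none) (fun o => o.elim (#{x | f x = i} - Fintype.card κ * e i) fun _ => e i)
      (by rw [Fintype.sum_option (α := κ)]
          simp only [Option.elim, sum_const, card_univ, smul_eq_mul]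
          exact Nat.sub_add_cancel (he i))
    exact ⟨l, fun t => hl (some t)⟩
  choose l hl using h_fiber
  refine ⟨fun x => l (f x) x, fun i t => ?_⟩
  rw [← hl i t, filter_filter]
  exact congrArg card (filter_congr fun x _ => and_congr_right fun hx => by rw [← hx])

theorem Finset.exists_finset_eqOn_of_card_filter_sub_le {α ι : Type*} [Fintype α]
    [DecidableEq α] [Fintype ι] [DecidableEq ι] (k : ℕ) (f : α → ι) (T : ι → ℕ)
    (hT : ∑ i, T i = Fintype.card α)
    (h_excess : ∀ i, (k + 1) * (#{x | f x = i} - T i) ≤ #{x | f x = i}) :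
    ∃ G : Finset (α → ι), #G ≤ k + 1 ∧ (∀ g ∈ G, ∀ i, #{x | g x = i} = T i) ∧
      ∀ S : Finset α, #S ≤ k → ∃ g ∈ G, ∀ x ∈ S, g x = f x := by
  obtain ⟨label, hlabel⟩ := exists_labelling_card_filter_eq (κ := Fin (k + 1)) f
    (fun i => #{x | f x = i} - T i) (by simpa using h_excess)
  have h_smooth (t : Fin (k + 1)) : ∃ g : α → ι,
      (∀ x ∈ ({x | label x ≠ some t} : Finset α), g x = f x) ∧
        ∀ i, #{x | g x = i} = T i := by
    refine exists_eqOn_card_filter_eq f _ T hT fun i => ?_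
    have h_split := card_filter_add_card_filter_not (s := ({x | f x = i} : Finset α))
      (fun x => label x = some t)
    simp only [filter_filter, hlabel, ne_eq, and_comm] at h_split ⊢
    omega
  choose g hg_eq hg_card using h_smooth
  refine ⟨univ.image g, card_image_le.trans (by simp), ?_, fun S hS => ?_⟩
  · rintro _ hg
    obtain ⟨t, -, rfl⟩ := mem_image.1 hg
    exact hg_card t
  obtain ⟨o, ho, ho_S⟩ := exists_mem_notMem_of_card_lt_card
    (s := S.image label) (t := univ.map Function.Embedding.some)
    (by simpa using card_image_le.trans_lt (hS.trans_lt k.lt_succ_self))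
  obtain ⟨t, -, rfl⟩ := mem_map.1 ho
  refine ⟨g t, mem_image_of_mem g (mem_univ t), fun x hx => hg_eq t x ?_⟩
  simpa using fun h => ho_S (mem_image.2 ⟨x, hx, h⟩)

theorem Finset.le_sum_div_card_add_of_abs_sub_le {ι : Type*} {I : Finset ι} {c : ι → ℕ}
    {a : ℕ} (h : ∀ i ∈ I, ∀ j ∈ I, |(c i : ℤ) - c j| ≤ a) {i : ι} (hi : i ∈ I) :
    c i ≤ (∑ j ∈ I, c j) / #I + a := by
  by_contra! h_big
  have h_all : ∀ j ∈ I, (∑ j ∈ I, c j) / #I + 1 ≤ c j := fun j hj => by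
    have := (abs_le.1 (h i hi j hj)).2
    omega
  have h_lower : #I * ((∑ j ∈ I, c j) / #I + 1) ≤ ∑ j ∈ I, c j := by
    simpa using card_nsmul_le_sum I c _ h_all
  exact (Nat.lt_mul_div_succ _ (card_pos.2 ⟨i, hi⟩)).not_ge h_lower

theorem Finset.exists_sum_eq_of_div_le_le_ceil {ι : Type*} [DecidableEq ι] {I : Finset ι}
    (hI : I.Nonempty) (n : ℕ) :
    ∃ T : ι → ℕ, (∀ i ∉ I, T i = 0) ∧
      (∀ i ∈ I, n / #I ≤ T i ∧ T i ≤ (n + #I - 1) / #I) ∧ ∑ i ∈ I, T i = n := by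
  have hm := card_pos.2 hI
  obtain ⟨R, hRI, hR⟩ := exists_subset_card_eq (Nat.mod_lt n hm).le
  refine ⟨fun i => if i ∈ I then n / #I + if i ∈ R then 1 else 0 else 0,
    fun i hi => if_neg hi, fun i hi => ?_, ?_⟩
  · simp only [if_pos hi]
    refine ⟨Nat.le_add_right _ _, ?_⟩
    split_ifs with hiR
    · have h_mod : 0 < n % #I := hR ▸ card_pos.2 ⟨i, hiR⟩
      rw [Nat.le_div_iff_mul_le hm, add_mul, one_mul]
      have := Nat.div_add_mod n #I
      rw [mul_comm]
      omega
    · exact Nat.div_le_div_right (by omega)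
  · rw [sum_ite_of_true fun i hi => hi, sum_add_distrib, sum_const, smul_eq_mul, ← card_filter,
      filter_mem_eq_inter, inter_eq_right.2 hRI, hR]
    exact Nat.div_add_mod n #I

theorem Nat.succ_mul_tsub_le_of_le_add {c T q a k : ℕ} (hc : c ≤ q + a) (hq : a * (k + 1) ≤ q)
    (hT : q ≤ T) : (k + 1) * (c - T) ≤ c := by
  obtain h_le | h_ge := le_total c T
  · simp [Nat.sub_eq_zero_of_le h_le]
  · obtain ⟨d, rfl⟩ := Nat.exists_eq_add_of_le h_ge
    rw [Nat.add_sub_cancel_left]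
    nlinarith

theorem exists_uniform_finset_eqOn {n k ℓ a : ℕ} (hn : 0 < n) (hsize : a * ℓ * (k + 1) ≤ n)
    (f : Fin n → Fin ℓ) (hf : ∀ i ∈ univ.image f, ∀ j ∈ univ.image f,
      |(preimCard f i : ℤ) - (preimCard f j : ℤ)| ≤ (a : ℤ)) :
    ∃ G : Finset (Fin n → Fin ℓ), #G ≤ k + 1 ∧ IsUniformFamily n ℓ G ∧
      ∀ S : Finset (Fin n), #S ≤ k → ∃ g ∈ G, ∀ x ∈ S, g x = f x := by
  set I := univ.image f
  have hI : I.Nonempty := univ_nonempty_iff.2 ⟨⟨0, hn⟩⟩ |>.image f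
  have hm := card_pos.2 hI
  have hq : a * (k + 1) ≤ n / #I := by
    rw [Nat.le_div_iff_mul_le hm]
    calc a * (k + 1) * #I ≤ a * (k + 1) * ℓ :=
          Nat.mul_le_mul_left _ (card_le_univ I |>.trans_eq (Fintype.card_fin ℓ))
      _ = a * ℓ * (k + 1) := by ring
      _ ≤ n := hsize
  have hq_pos : 0 < n / #I := Nat.div_pos (card_image_le.trans_eq (card_fin n)) hm
  have h_sum : ∑ i ∈ I, preimCard f i = n :=
    (card_eq_sum_card_fiberwise fun x _ => mem_image_of_mem f (mem_univ x)).symm.trans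
      (card_fin n)
  obtain ⟨T, hT_out, hT_bounds, hT_sum⟩ := exists_sum_eq_of_div_le_le_ceil hI n
  have hT_pos (i : Fin ℓ) : 0 < T i ↔ i ∈ I := by
    by_cases hi : i ∈ I
    · exact iff_of_true (hq_pos.trans_le (hT_bounds i hi).1) hi
    · exact iff_of_false (by simp [hT_out i hi]) hi
  have h_excess (i : Fin ℓ) : (k + 1) * (#{x | f x = i} - T i) ≤ #{x | f x = i} := by
    by_cases hi : i ∈ I
    · have h_le := le_sum_div_card_add_of_abs_sub_le hf hi
      rw [h_sum] at h_le
      exact Nat.succ_mul_tsub_le_of_le_add h_le hq (hT_bounds i hi).1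
    · simp_all [I]
  obtain ⟨G, hG_card, hG_fibers, hG_eq⟩ := exists_finset_eqOn_of_card_filter_sub_le k f T
    (by rw [← sum_subset (subset_univ I) fun i _ hi => hT_out i hi, hT_sum, Fintype.card_fin])
    h_excess
  refine ⟨G, hG_card, fun g hg => ?_, hG_eq⟩
  have h_image : univ.image g = I := by
    ext i
    rw [← hT_pos, ← hG_fibers g hg i, card_pos, filter_nonempty_iff]
    simp
  intro i hi
  rw [imageSize, preimCard, h_image, hG_fibers g hg i]
  exact hT_bounds i (h_image ▸ hi)

theorem exists_uniform_splitter_of_forall_exists_finset_eqOn {n k ℓ N : ℕ}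
    {F : Finset (Fin n → Fin ℓ)} (hF : IsSplitter n k ℓ F)
    (h : ∀ f ∈ F, ∃ G : Finset (Fin n → Fin ℓ), #G ≤ N ∧ IsUniformFamily n ℓ G ∧
      ∀ S : Finset (Fin n), #S ≤ k → ∃ g ∈ G, ∀ x ∈ S, g x = f x) :
    ∃ F' : Finset (Fin n → Fin ℓ), IsSplitter n k ℓ F' ∧ IsUniformFamily n ℓ F' ∧
      #F' ≤ N * #F := by
  choose! G hG_card hG_unif hG_eq using h
  refine ⟨F.biUnion G, fun S hS => ?_, fun g hg => ?_, ?_⟩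
  · obtain ⟨f, hf, hf_split⟩ := hF S hS
    obtain ⟨g, hg, hgf⟩ := hG_eq f hf S hS.le
    refine ⟨g, mem_biUnion.2 ⟨f, hf, hg⟩, fun i => ?_⟩
    rw [filter_congr fun x hx => by rw [hgf x hx]]
    exact hf_split i
  · obtain ⟨f, hf, hg⟩ := mem_biUnion.1 hg
    exact hG_unif f hf g hg
  · calc #(F.biUnion G) ≤ ∑ f ∈ F, #(G f) := card_biUnion_le
      _ ≤ ∑ _f ∈ F, N := sum_le_sum hG_card
      _ = N * #F := by rw [sum_const, smul_eq_mul, mul_comm]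

theorem smoothing_lemma_general (n k ℓ a : ℕ)
    (hn : 0 < n) (hsize : a * ℓ * (k + 1) ≤ n)
    (F : Finset (Fin n → Fin ℓ))
    (hsp : IsSplitter n k ℓ F) (hau : IsAUniformFamily n ℓ a F) :
    ∃ F' : Finset (Fin n → Fin ℓ),
      IsSplitter n k ℓ F' ∧ IsUniformFamily n ℓ F' ∧
        F'.card ≤ (k + 1) * F.card :=
  exists_uniform_splitter_of_forall_exists_finset_eqOn hsp fun f hf =>
    exists_uniform_finset_eqOn hn hsize f (hau f hf).2

/-- **Smoothing Lemma.** If `ℓ ≥ k`, `n ≥ a·ℓ·(k+1)` and there is an `a`-uniform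
`(n,k,ℓ)`-splitter `F`, then there is a uniform `(n,k,ℓ)`-splitter of size at most
`(k+1)·|F|`. -/
theorem smoothing_lemma (n k ℓ a : ℕ) (hk : 0 < k) (hℓ : 0 < ℓ) (ha : 0 < a)
    (hn : 0 < n) (hkℓ : k ≤ ℓ) (hsize : a * ℓ * (k + 1) ≤ n)
    (F : Finset (Fin n → Fin ℓ))
    (hsp : IsSplitter n k ℓ F) (hau : IsAUniformFamily n ℓ a F) :
    ∃ F' : Finset (Fin n → Fin ℓ),
      IsSplitter n k ℓ F' ∧ IsUniformFamily n ℓ F' ∧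
        F'.card ≤ (k + 1) * F.card :=
  smoothing_lemma_general n k ℓ a hn hsize F hsp hau
end

section
/- Let n, k, ℓ be integers with k ≥ 8, n ≥ k, and ℓ ≥ k²·log n. Then there exists a uniform (n,k,ℓ)-splitter of size at most ⌈k²·log n / log ℓ⌉. -/
open Finset

/-!
If `n ≤ ℓ`, a single injection `[n] → [ℓ]` is a uniform splitter. Otherwise let `c : [n] → [ℓ]`
be reduction mod `ℓ`; its fibres have sizes `⌊n/ℓ⌋` or `⌈n/ℓ⌉`, so every `c ∘ σ` with `σ` a
permutation is uniform. Since the symmetric group is `2`-transitive, for fixed `x ≠ y` and a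
uniformly random `σ` the pair `(σ x, σ y)` is uniform among pairs of distinct points, so
`c (σ x) = c (σ y)` with probability at most `1/ℓ`, and `c ∘ σ` fails to be injective on a
fixed `k`-set with probability at most `k²/ℓ`. A union bound over the at most `n^k` sets of
size `k` shows that `t` independent permutations leave no `k`-set uncovered once
`n^k (k²)^t < ℓ^t`, which holds for `t = ⌈k² log n / log ℓ⌉`. As `k < ℓ`, injectivity on `S`
is exactly an even split of `S`.
-/

open Equiv

lemma Nat.sub_one_mul_le_of_le_add_sub_one_div {s n m : ℕ} (h : s ≤ (n + m - 1) / m) :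
    (s - 1) * m ≤ n - 1 := by
  rcases m.eq_zero_or_pos with rfl | hm
  · simp
  have := (Nat.le_div_iff_mul_le hm).mp h
  rw [Nat.sub_one_mul]
  omega

lemma exists_forall_exists_apply_notMem {ι Ω : Type*} [Fintype Ω] [DecidableEq Ω]
    (𝒮 : Finset ι) (bad : ι → Finset Ω) {t : ℕ}
    (h : ∑ S ∈ 𝒮, #(bad S) ^ t < Fintype.card Ω ^ t) :
    ∃ g : Fin t → Ω, ∀ S ∈ 𝒮, ∃ j, g j ∉ bad S := by
  by_contra! hcon
  have hcover : (univ : Finset (Fin t → Ω)) ⊆ 𝒮.biUnion fun S => Fintype.piFinset fun _ => bad S :=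
    fun g _ => by
      obtain ⟨S, hS, hg⟩ := hcon g
      exact mem_biUnion.mpr ⟨S, hS, Fintype.mem_piFinset.mpr hg⟩
  refine h.not_ge ?_
  calc Fintype.card Ω ^ t = #(univ : Finset (Fin t → Ω)) := by simp
    _ ≤ ∑ S ∈ 𝒮, #(Fintype.piFinset fun _ : Fin t => bad S) :=
        (card_le_card hcover).trans card_biUnion_le
    _ = ∑ S ∈ 𝒮, #(bad S) ^ t := by simp

section Collisions

variable {α β : Type*} [Fintype α] [DecidableEq β]

def collisionPairs (c : α → β) : Finset (α × α) :=
  {p ∈ univ.offDiag | c p.1 = c p.2}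

lemma not_injOn_iff_exists_mem_collisionPairs {c : α → β} {S : Finset α} :
    ¬ Set.InjOn c S ↔ ∃ p ∈ S.offDiag, p ∈ collisionPairs c := by
  simp only [Set.InjOn, collisionPairs, mem_coe, mem_offDiag, mem_filter, mem_univ, true_and]
  aesop

lemma card_collisionPairs_comp_perm (c : α → β) (σ : Perm α) :
    #(collisionPairs (c ∘ σ)) = #(collisionPairs c) :=
  card_equiv (σ.prodCongr σ) (by simp [collisionPairs])

lemma card_collisionPairs_mul_le [Fintype β] (c : α → β) {m : ℕ}
    (hc : ∀ b, #{a | c a = b} ≤ (Fintype.card α + m - 1) / m) :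
    #(collisionPairs c) * m ≤ Fintype.card α * (Fintype.card α - 1) := by
  have hfiber : ∀ b, #{p ∈ collisionPairs c | c p.1 = b} = #({a | c a = b} : Finset α).offDiag := by
    intro b
    congr 1
    ext ⟨x, y⟩
    simp only [collisionPairs, mem_filter, mem_offDiag, mem_univ, true_and]
    grind
  calc #(collisionPairs c) * m
      = ∑ b, #{a | c a = b} * ((#{a | c a = b} - 1) * m) := by
        rw [card_eq_sum_card_fiberwise (f := fun p => c p.1) (t := univ) (by simp), sum_mul]
        refine sum_congr rfl fun b _ => ?_
        rw [hfiber, offDiag_card, ← Nat.mul_sub_one, mul_assoc]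
    _ ≤ ∑ b, #{a | c a = b} * (Fintype.card α - 1) :=
        sum_le_sum fun b _ =>
          Nat.mul_le_mul_left _ (Nat.sub_one_mul_le_of_le_add_sub_one_div (hc b))
    _ = Fintype.card α * (Fintype.card α - 1) := by
        rw [← sum_mul, ← card_eq_sum_card_fiberwise (by simp), card_univ]

variable [DecidableEq α]

lemma card_perm_collision_eq {c : α → β} {x y x' y' : α} (hxy : x ≠ y) (hxy' : x' ≠ y') :
    #{σ : Perm α | c (σ x) = c (σ y)} = #{σ : Perm α | c (σ x') = c (σ y')} := by
  obtain ⟨π, hπx, hπy⟩ :=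
    MulAction.is_two_pretransitive_iff.mp (Perm.isMultiplyPretransitive α 2) hxy' hxy
  refine card_equiv (Equiv.mulRight π) fun σ => ?_
  simp only [mem_filter, mem_univ, true_and, Equiv.coe_mulRight, Perm.mul_apply]
  rw [← hπx, ← hπy]
  rfl

lemma card_perm_collision_mul_eq (c : α → β) {x y : α} (hxy : x ≠ y) :
    #{σ : Perm α | c (σ x) = c (σ y)} * (Fintype.card α * (Fintype.card α - 1))
      = Fintype.card (Perm α) * #(collisionPairs c) := by
  calc _ = ∑ p ∈ univ.offDiag, #{σ : Perm α | c (σ x) = c (σ y)} := by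
        rw [sum_const, offDiag_card, card_univ, smul_eq_mul, Nat.mul_sub_one, mul_comm]
    _ = ∑ p ∈ univ.offDiag, #{σ : Perm α | c (σ p.1) = c (σ p.2)} :=
        sum_congr rfl fun p hp => card_perm_collision_eq hxy (mem_offDiag.mp hp).2.2
    _ = ∑ σ : Perm α, #(collisionPairs (c ∘ σ)) :=
        sum_card_bipartiteAbove_eq_sum_card_bipartiteBelow _
    _ = _ := by simp [card_collisionPairs_comp_perm]

lemma card_perm_collision_mul_le [Fintype β] {c : α → β} {m : ℕ}
    (hc : ∀ b, #{a | c a = b} ≤ (Fintype.card α + m - 1) / m) {x y : α} (hxy : x ≠ y) :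
    #{σ : Perm α | c (σ x) = c (σ y)} * m ≤ Fintype.card (Perm α) := by
  have hpos : 0 < Fintype.card α * (Fintype.card α - 1) := by
    have := Fintype.one_lt_card_iff.mpr ⟨x, y, hxy⟩
    exact Nat.mul_pos (by omega) (by omega)
  refine Nat.le_of_mul_le_mul_right ?_ hpos
  calc _ = Fintype.card (Perm α) * (#(collisionPairs c) * m) := by
        rw [mul_right_comm, card_perm_collision_mul_eq c hxy, mul_assoc]
    _ ≤ _ := Nat.mul_le_mul_left _ (card_collisionPairs_mul_le c hc)

lemma card_perm_not_injOn_mul_le [Fintype β] {c : α → β} {m : ℕ}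
    (hc : ∀ b, #{a | c a = b} ≤ (Fintype.card α + m - 1) / m) (S : Finset α) :
    #{σ : Perm α | ¬ Set.InjOn (c ∘ σ) S} * m ≤ #S.offDiag * Fintype.card (Perm α) := by
  have hsub : ({σ : Perm α | ¬ Set.InjOn (c ∘ σ) S} : Finset (Perm α))
      ⊆ S.offDiag.biUnion fun p => {σ : Perm α | c (σ p.1) = c (σ p.2)} := by
    intro σ hσ
    obtain ⟨p, hpS, hp⟩ := not_injOn_iff_exists_mem_collisionPairs.mp (mem_filter.mp hσ).2
    exact mem_biUnion.mpr ⟨p, hpS, mem_filter.mpr ⟨mem_univ σ, (mem_filter.mp hp).2⟩⟩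
  calc _ ≤ (∑ p ∈ S.offDiag, #{σ : Perm α | c (σ p.1) = c (σ p.2)}) * m :=
        Nat.mul_le_mul_right _ ((card_le_card hsub).trans card_biUnion_le)
    _ ≤ ∑ p ∈ S.offDiag, Fintype.card (Perm α) := by
        rw [sum_mul]
        exact sum_le_sum fun p hp => card_perm_collision_mul_le hc (mem_offDiag.mp hp).2.2
    _ = _ := by rw [sum_const, smul_eq_mul]

lemma exists_perms_forall_injOn [Fintype β] {c : α → β} {m : ℕ}
    (hc : ∀ b, #{a | c a = b} ≤ (Fintype.card α + m - 1) / m) {k t : ℕ}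
    (hkt : Fintype.card α ^ k * (k ^ 2) ^ t < m ^ t) :
    ∃ g : Fin t → Perm α, ∀ S : Finset α, #S = k → ∃ j, Set.InjOn (c ∘ g j) S := by
  set N := Fintype.card (Perm α)
  have hbad : ∀ S ∈ powersetCard k (univ : Finset α),
      #{σ : Perm α | ¬ Set.InjOn (c ∘ σ) S} * m ≤ k ^ 2 * N := fun S hS => by
    refine (card_perm_not_injOn_mul_le hc S).trans (Nat.mul_le_mul_right _ ?_)
    rw [offDiag_card, (mem_powersetCard.mp hS).2, sq]
    exact Nat.sub_le _ _
  have hsum : ∑ S ∈ powersetCard k (univ : Finset α),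
      #{σ : Perm α | ¬ Set.InjOn (c ∘ σ) S} ^ t < N ^ t := by
    refine lt_of_mul_lt_mul_right ?_ (Nat.zero_le (m ^ t))
    calc _ = ∑ S ∈ powersetCard k (univ : Finset α),
            (#{σ : Perm α | ¬ Set.InjOn (c ∘ σ) S} * m) ^ t := by
          simp only [sum_mul, mul_pow]
      _ ≤ ∑ S ∈ powersetCard k (univ : Finset α), (k ^ 2 * N) ^ t :=
          sum_le_sum fun S hS => Nat.pow_le_pow_left (hbad S hS) t
      _ = (Fintype.card α).choose k * (k ^ 2) ^ t * N ^ t := by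
          rw [sum_const, card_powersetCard, card_univ, smul_eq_mul, mul_pow, mul_assoc]
      _ ≤ Fintype.card α ^ k * (k ^ 2) ^ t * N ^ t := by
          gcongr; exact Nat.choose_le_pow _ _
      _ < m ^ t * N ^ t := Nat.mul_lt_mul_of_pos_right hkt (by positivity)
      _ = N ^ t * m ^ t := mul_comm _ _
  obtain ⟨g, hg⟩ := exists_forall_exists_apply_notMem _ _ hsum
  refine ⟨g, fun S hS => ?_⟩
  obtain ⟨j, hj⟩ := hg S (mem_powersetCard.mpr ⟨subset_univ S, hS⟩)
  exact ⟨j, by simpa using hj⟩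

end Collisions

section Uniform

variable {n ℓ : ℕ}

lemma preimCard_comp_perm (f : Fin n → Fin ℓ) (σ : Perm (Fin n)) (i : Fin ℓ) :
    preimCard (f ∘ σ) i = preimCard f i :=
  card_equiv σ (by simp)

lemma image_comp_perm (f : Fin n → Fin ℓ) (σ : Perm (Fin n)) :
    univ.image (f ∘ σ) = univ.image f := by
  ext i
  simp only [mem_image, mem_univ, true_and, Function.comp_apply]
  exact ⟨fun ⟨a, ha⟩ => ⟨σ a, ha⟩, fun ⟨a, ha⟩ => ⟨σ.symm a, by simpa using ha⟩⟩

lemma isUniformFamily_image_comp_perm {ι : Type*} [Fintype ι] {c : Fin n → Fin ℓ}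
    (hc : IsUniformFamily n ℓ {c}) (g : ι → Perm (Fin n)) :
    IsUniformFamily n ℓ (univ.image fun j => c ∘ g j) := by
  intro f hf
  obtain ⟨j, -, rfl⟩ := mem_image.mp hf
  simp only [imageSize, image_comp_perm, preimCard_comp_perm]
  exact hc c (mem_singleton_self c)

lemma isUniformFamily_singleton_of_injective {f : Fin n → Fin ℓ} (hf : Function.Injective f) :
    IsUniformFamily n ℓ {f} := by
  intro g hg i hi
  obtain rfl := mem_singleton.mp hg
  obtain ⟨x, -, rfl⟩ := mem_image.mp hi
  have hpre : preimCard g (g x) = 1 := card_eq_one.mpr ⟨x, by ext; simp [hf.eq_iff]⟩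
  have hn : 0 < n := x.pos
  rw [hpre, imageSize, card_image_of_injective _ hf, card_univ, Fintype.card_fin, Nat.div_self hn]
  exact ⟨le_rfl, (Nat.le_div_iff_mul_le hn).mpr (by omega)⟩

def modFin (n ℓ : ℕ) [NeZero ℓ] (x : Fin n) : Fin ℓ :=
  Fin.ofNat ℓ x

variable [NeZero ℓ]

lemma preimCard_modFin (i : Fin ℓ) :
    preimCard (modFin n ℓ) i = n / ℓ + if (i : ℕ) < n % ℓ then 1 else 0 := by
  have hcount := Nat.count_modEq_card n (Nat.pos_of_neZero ℓ) i
  rw [Nat.mod_eq_of_lt i.isLt] at hcount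
  rw [← hcount, Nat.count_eq_card_filter_range, preimCard]
  have hmod : ∀ x : ℕ, x ≡ i [MOD ℓ] ↔ x % ℓ = i := fun x => by
    rw [Nat.ModEq, Nat.mod_eq_of_lt i.isLt]
  refine card_nbij (↑) (fun x hx => ?_) (fun _ _ _ _ => Fin.ext) fun x hx => ?_
  · simp_all [modFin, Fin.ext_iff]
  · simp only [coe_filter, mem_range, hmod] at hx
    exact ⟨⟨x, hx.1⟩, by simp [modFin, Fin.ext_iff, hx.2]⟩

lemma preimCard_modFin_mem_Icc (i : Fin ℓ) :
    n / ℓ ≤ preimCard (modFin n ℓ) i ∧ preimCard (modFin n ℓ) i ≤ (n + ℓ - 1) / ℓ := by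
  have hℓ := Nat.pos_of_neZero ℓ
  rw [preimCard_modFin]
  split_ifs with hi
  · refine ⟨Nat.le_add_right _ _, (Nat.le_div_iff_mul_le hℓ).mpr ?_⟩
    have := Nat.div_add_mod n ℓ
    rw [add_mul, one_mul, mul_comm]
    omega
  · exact ⟨le_rfl, Nat.div_le_div_right (by omega)⟩

lemma imageSize_modFin (hℓn : ℓ ≤ n) : imageSize (modFin n ℓ) = ℓ := by
  rw [imageSize, eq_univ_of_forall fun i => mem_image.mpr ⟨Fin.castLE hℓn i, mem_univ _, ?_⟩,
    card_univ, Fintype.card_fin]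
  ext
  simp [modFin]

lemma isUniformFamily_singleton_modFin (hℓn : ℓ ≤ n) : IsUniformFamily n ℓ {modFin n ℓ} := by
  intro f hf i _
  obtain rfl := mem_singleton.mp hf
  rw [imageSize_modFin hℓn]
  exact preimCard_modFin_mem_Icc i

end Uniform

lemma isSplitter_of_forall_exists_injOn {n k ℓ : ℕ} {F : Finset (Fin n → Fin ℓ)} (hk : 0 < k)
    (hkℓ : k < ℓ) (hF : ∀ S : Finset (Fin n), #S = k → ∃ f ∈ F, Set.InjOn f S) :
    IsSplitter n k ℓ F := by
  intro S hS
  obtain ⟨f, hf, hinj⟩ := hF S hS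
  refine ⟨f, hf, fun i => ⟨by simp [Nat.div_eq_of_lt hkℓ], ?_⟩⟩
  calc #{x ∈ S | f x = i} ≤ 1 := card_le_one.mpr fun a ha b hb => by
        rw [mem_filter] at ha hb
        exact hinj ha.1 hb.1 (ha.2.trans hb.2.symm)
    _ ≤ (k + ℓ - 1) / ℓ := (Nat.le_div_iff_mul_le (by omega)).mpr (by omega)

lemma two_mul_sq_lt_two_pow {k : ℕ} (hk : 7 ≤ k) : 2 * k ^ 2 < 2 ^ k := by
  induction k, hk using Nat.le_induction with
  | base => norm_num
  | succ k hk ih =>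
    calc 2 * (k + 1) ^ 2 ≤ 2 * (2 * k ^ 2) := by nlinarith
      _ < 2 ^ (k + 1) := by rw [pow_succ 2 k]; omega

lemma Real.logb_two_mul_sq {x : ℝ} (hx : x ≠ 0) :
    Real.logb 2 (2 * x ^ 2) = 2 * Real.logb 2 x + 1 := by
  rw [Real.logb_mul two_ne_zero (pow_ne_zero 2 hx), Real.logb_pow,
    Real.logb_self_eq_one one_lt_two]
  push_cast
  ring

lemma two_mul_sq_le_of_sq_mul_logb_le {n k ℓ : ℕ} (hn : 4 ≤ n)
    (hℓ : (k : ℝ) ^ 2 * Real.logb 2 n ≤ ℓ) : 2 * k ^ 2 ≤ ℓ := by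
  have hN : 2 ≤ Real.logb 2 n := by
    rw [Real.le_logb_iff_rpow_le one_lt_two (by norm_cast; omega)]
    norm_num
    omega
  have : 2 * (k : ℝ) ^ 2 ≤ ℓ := by nlinarith [sq_nonneg (k : ℝ)]
  exact_mod_cast this

lemma pow_mul_sq_pow_lt_pow {n k ℓ t : ℕ} (hk : 7 ≤ k) (hn : 4 ≤ n)
    (hℓ : (k : ℝ) ^ 2 * Real.logb 2 n ≤ ℓ)
    (ht : (k : ℝ) ^ 2 * Real.logb 2 n / Real.logb 2 ℓ ≤ t) :
    n ^ k * (k ^ 2) ^ t < ℓ ^ t := by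
  set K := Real.logb 2 k
  set N := Real.logb 2 n
  set L := Real.logb 2 ℓ
  have hk0 : (0 : ℝ) < k := by norm_cast; omega
  have hn0 : (0 : ℝ) < n := by norm_cast; omega
  have hℓk := two_mul_sq_le_of_sq_mul_logb_le hn hℓ
  have hℓ0 : (0 : ℝ) < ℓ := by norm_cast; nlinarith
  have hK : 0 ≤ K := Real.logb_nonneg one_lt_two (by norm_cast; omega)
  have hN : 0 < N := Real.logb_pos one_lt_two (by norm_cast; omega)
  have h2k : 2 * K + 1 < k := by
    have h := two_mul_sq_lt_two_pow hk
    rw [← Nat.cast_lt (α := ℝ), ← Real.logb_lt_logb_iff one_lt_two (by positivity) (by positivity)]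
      at h
    push_cast at h
    rwa [Real.logb_two_mul_sq hk0.ne', Real.logb_pow, Real.logb_self_eq_one one_lt_two,
      mul_one] at h
  have hL : 2 * K + 1 ≤ L := by
    have h : 2 * (k : ℝ) ^ 2 ≤ ℓ := by exact_mod_cast hℓk
    rw [← Real.logb_two_mul_sq hk0.ne']
    exact Real.logb_le_logb_of_le one_lt_two (by positivity) h
  have hL0 : 0 < L := by linarith
  have htL : (k : ℝ) ^ 2 * N ≤ t * L := (div_le_iff₀ hL0).mp ht
  -- `t (L - 2K) (2K + 1) ≥ t L ≥ k² N > k N (2K + 1)`, using `L ≥ 2K + 1` and `k > 2K + 1`.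
  have hkey : k * N + t * (2 * K) < t * L := by
    have h1 : (t : ℝ) * L ≤ t * (L - 2 * K) * (2 * K + 1) := by
      have := mul_nonneg (mul_nonneg (Nat.cast_nonneg t) hK) (sub_nonneg.mpr hL)
      nlinarith
    have h2 : k * N * (2 * K + 1) < t * (L - 2 * K) * (2 * K + 1) := by
      have := mul_lt_mul_of_pos_left h2k (mul_pos hk0 hN)
      nlinarith
    nlinarith [lt_of_mul_lt_mul_right h2 (by linarith : (0 : ℝ) ≤ 2 * K + 1)]
  have hpos : (0 : ℝ) < n ^ k * (k ^ 2) ^ t := by positivity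
  have : (n : ℝ) ^ k * ((k : ℝ) ^ 2) ^ t < (ℓ : ℝ) ^ t := by
    rw [← Real.logb_lt_logb_iff one_lt_two hpos (by positivity), Real.logb_mul (by positivity)
      (by positivity), Real.logb_pow, Real.logb_pow, Real.logb_pow, Real.logb_pow]
    push_cast
    linarith
  exact_mod_cast this

/-- For `k ≥ 8`, `n ≥ k` and `ℓ ≥ k²·log n` there is a uniform `(n,k,ℓ)`-splitter of
size at most `⌈k²·log n / log ℓ⌉`. -/
theorem uniform_splitter_large_ell (n k ℓ : ℕ) (hk : 8 ≤ k) (hn : k ≤ n)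
    (hℓ : (k : ℝ) ^ 2 * Real.logb 2 n ≤ (ℓ : ℝ)) :
    ∃ F : Finset (Fin n → Fin ℓ),
      IsSplitter n k ℓ F ∧ IsUniformFamily n ℓ F ∧
        F.card ≤ ⌈(k : ℝ) ^ 2 * Real.logb 2 n / Real.logb 2 ℓ⌉₊ := by
  have hkℓ : k < ℓ := by
    have := two_mul_sq_le_of_sq_mul_logb_le (by omega) hℓ
    nlinarith
  rcases le_or_gt n ℓ with hnℓ | hℓn
  · refine ⟨{Fin.castLE hnℓ}, isSplitter_of_forall_exists_injOn (by omega) hkℓ fun S _ =>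
      ⟨_, mem_singleton_self _, (Fin.castLE_injective hnℓ).injOn⟩,
      isUniformFamily_singleton_of_injective (Fin.castLE_injective hnℓ), ?_⟩
    rw [card_singleton, Nat.one_le_ceil_iff]
    have := Real.logb_pos one_lt_two (by norm_cast; omega : (1 : ℝ) < n)
    have := Real.logb_pos one_lt_two (by norm_cast; omega : (1 : ℝ) < ℓ)
    positivity
  · have : NeZero ℓ := ⟨by omega⟩
    set t := ⌈(k : ℝ) ^ 2 * Real.logb 2 n / Real.logb 2 ℓ⌉₊
    obtain ⟨g, hg⟩ := exists_perms_forall_injOn (c := modFin n ℓ) (k := k) (t := t)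
      (fun i => by rw [Fintype.card_fin]; exact (preimCard_modFin_mem_Icc i).2)
      (by simpa using pow_mul_sq_pow_lt_pow (by omega) (by omega) hℓ (Nat.le_ceil _))
    refine ⟨univ.image fun j => modFin n ℓ ∘ g j, isSplitter_of_forall_exists_injOn (by omega) hkℓ
      fun S hS => ?_, isUniformFamily_image_comp_perm (isUniformFamily_singleton_modFin hℓn.le) g,
      card_image_le.trans (by simp)⟩
    obtain ⟨j, hj⟩ := hg S hS
    exact ⟨_, mem_image_of_mem _ (mem_univ j), hj⟩
end

section
/- There exists a constant C > 0 such that for all integers n ≥ 16, k ≥ 2, ℓ with k ≤ (log log n)², k² ≤ ℓ ≤ ⌈(log log n)⁶⌉, and with t = ⌈(log log n)⁶⌉, there exists a strongly uniform (t,k,ℓ)-splitter of size at most C·k·(1 + log log log n). -/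
open Finset

lemma filter_comp_equiv_card {α : Type*} [Fintype α] [DecidableEq α] (e : Equiv.Perm α)
    (p : α → Prop) [DecidablePred p] :
    (Finset.univ.filter fun x => p (e x)).card = (Finset.univ.filter p).card := by
  apply Finset.card_bij (fun x _ => e x)
  · intro a ha; simp only [mem_filter, mem_univ, true_and] at ha ⊢; exact ha
  · intro a _ b _ h; exact e.injective h
  · intro b hb
    refine ⟨e.symm b, ?_, by simp⟩
    simp only [mem_filter, mem_univ, true_and] at hb ⊢
    simpa using hb

lemma preimCard_comp {t ℓ : ℕ} (f : Fin t → Fin ℓ) (e : Equiv.Perm (Fin t)) (i : Fin ℓ) :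
    preimCard (f ∘ e) i = preimCard f i :=
  filter_comp_equiv_card e (fun x => f x = i)

lemma preimCard_mod (t ℓ : ℕ) (hl : 0 < ℓ) (i : Fin ℓ) :
    preimCard (fun x : Fin t => (⟨x.val % ℓ, Nat.mod_lt _ hl⟩ : Fin ℓ)) i
      = t / ℓ + if i.val < t % ℓ then 1 else 0 := by
  have h := Nat.count_modEq_card t hl i.val
  rw [Nat.count_eq_card_filter_range] at h
  rw [Nat.mod_eq_of_lt i.isLt] at h
  rw [← h]
  unfold preimCard
  apply Finset.card_bij (fun x _ => x.val)
  · intro a ha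
    simp only [mem_filter, mem_univ, true_and, Fin.ext_iff] at ha
    simp only [mem_filter, Finset.mem_range]
    refine ⟨a.isLt, ?_⟩
    show a.val % ℓ = i.val % ℓ
    rw [Nat.mod_eq_of_lt i.isLt]; exact ha
  · intro a _ b _ hab; exact Fin.ext hab
  · intro b hb
    simp only [mem_filter, Finset.mem_range] at hb
    refine ⟨⟨b, hb.1⟩, ?_, rfl⟩
    simp only [mem_filter, mem_univ, true_and, Fin.ext_iff]
    have hb2 : b % ℓ = i.val % ℓ := hb.2
    rw [Nat.mod_eq_of_lt i.isLt] at hb2; exact hb2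
def unifF (t ℓ : ℕ) : Finset (Fin t → Fin ℓ) :=
  Finset.univ.filter fun f => ∀ i : Fin ℓ,
    t / ℓ ≤ preimCard f i ∧ preimCard f i ≤ (t + ℓ - 1) / ℓ

lemma ceil_div_le (t ℓ : ℕ) (hl : 0 < ℓ) : (t + ℓ - 1) / ℓ ≤ t / ℓ + 1 := by
  calc (t + ℓ - 1) / ℓ ≤ (t + ℓ) / ℓ := Nat.div_le_div_right (by omega)
    _ = t / ℓ + 1 := Nat.add_div_right t hl

lemma unifF_nonempty (t ℓ : ℕ) (hl : 0 < ℓ) : (unifF t ℓ).Nonempty := by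
  refine ⟨fun x : Fin t => (⟨x.val % ℓ, Nat.mod_lt _ hl⟩ : Fin ℓ), ?_⟩
  rw [unifF, Finset.mem_filter]
  refine ⟨Finset.mem_univ _, fun i => ?_⟩
  rw [preimCard_mod t ℓ hl i]
  constructor
  · omega
  · split_ifs with h
    · -- i.val < t % ℓ, so ℓ does not divide t and t ≥ 1
      have hdm := Nat.div_add_mod t ℓ
      have hml := Nat.mod_lt t hl
      have ht1 : 0 < t % ℓ := by omega
      have h2 : t / ℓ ≤ (t - 1) / ℓ := by
        rw [Nat.le_div_iff_mul_le hl, Nat.mul_comm]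
        omega
      have h3 : (t + ℓ - 1) / ℓ = (t - 1) / ℓ + 1 := by
        have he : t + ℓ - 1 = (t - 1) + ℓ := by omega
        rw [he, Nat.add_div_right _ hl]
      omega
    · have : t / ℓ ≤ (t + ℓ - 1) / ℓ := Nat.div_le_div_right (by omega)
      omega
lemma pair_card_eq (t ℓ : ℕ) (x y y' : Fin t) (hxy : x ≠ y) (hxy' : x ≠ y') :
    ((unifF t ℓ).filter fun f => f x = f y).card
      = ((unifF t ℓ).filter fun f => f x = f y').card := by
  have hswap : ∀ f : Fin t → Fin ℓ, f ∈ unifF t ℓ → f ∘ (Equiv.swap y y') ∈ unifF t ℓ := by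
    intro f hf
    rw [unifF, Finset.mem_filter] at hf ⊢
    refine ⟨Finset.mem_univ _, fun i => ?_⟩
    rw [preimCard_comp]
    exact hf.2 i
  apply Finset.card_bij (fun f _ => f ∘ (Equiv.swap y y'))
  · intro f hf
    rw [Finset.mem_filter] at hf ⊢
    refine ⟨hswap f hf.1, ?_⟩
    show f (Equiv.swap y y' x) = f (Equiv.swap y y' y')
    rw [Equiv.swap_apply_of_ne_of_ne hxy hxy', Equiv.swap_apply_right]
    exact hf.2
  · intro f _ g _ h
    funext z
    have := congrFun h (Equiv.swap y y' z)
    simpa [Equiv.swap_apply_self] using this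
  · intro g hg
    rw [Finset.mem_filter] at hg
    refine ⟨g ∘ (Equiv.swap y y'), ?_, ?_⟩
    · rw [Finset.mem_filter]
      refine ⟨hswap g hg.1, ?_⟩
      show g (Equiv.swap y y' x) = g (Equiv.swap y y' y)
      rw [Equiv.swap_apply_of_ne_of_ne hxy hxy', Equiv.swap_apply_left]
      exact hg.2
    · funext z
      show g (Equiv.swap y y' (Equiv.swap y y' z)) = g z
      rw [Equiv.swap_apply_self]

lemma pair_bound (t ℓ : ℕ) (hl : 0 < ℓ) {x y : Fin t} (hxy : x ≠ y) :
    (t - 1) * ((unifF t ℓ).filter fun f => f x = f y).card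
      ≤ (t / ℓ) * (unifF t ℓ).card := by
  have hsum : ∑ y' ∈ Finset.univ.erase x, ((unifF t ℓ).filter fun f => f x = f y').card
      = ∑ f ∈ unifF t ℓ, ((Finset.univ.erase x).filter fun y' => f x = f y').card := by
    simp_rw [Finset.card_filter]
    rw [Finset.sum_comm]
  have hinner : ∀ f ∈ unifF t ℓ,
      ((Finset.univ.erase x).filter fun y' => f x = f y').card ≤ t / ℓ := by
    intro f hf
    have h1 : insert x ((Finset.univ.erase x).filter fun y' => f x = f y')
        = Finset.univ.filter fun z => f x = f z := by
      ext z
      simp only [Finset.mem_insert, Finset.mem_filter, Finset.mem_erase, Finset.mem_univ,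
        true_and, and_true]
      constructor
      · rintro (rfl | ⟨_, h⟩)
        · rfl
        · exact h
      · intro h
        by_cases hz : z = x
        · exact Or.inl hz
        · exact Or.inr ⟨hz, h⟩
    have hxn : x ∉ (Finset.univ.erase x).filter fun y' => f x = f y' := by
      simp [Finset.mem_filter]
    have h2 : (Finset.univ.filter fun z => f x = f z).card = preimCard f (f x) := by
      unfold preimCard
      congr 1
      ext z
      simp only [Finset.mem_filter, Finset.mem_univ, true_and]
      exact ⟨fun h => h.symm, fun h => h.symm⟩
    have h3 := Finset.card_insert_of_notMem hxn
    rw [h1, h2] at h3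
    rw [unifF, Finset.mem_filter] at hf
    have h4 := (hf.2 (f x)).2
    have h5 := ceil_div_le t ℓ hl
    clear h1 h2 hxn hf hsum
    omega
  have hconst : ∀ y' ∈ Finset.univ.erase x,
      ((unifF t ℓ).filter fun f => f x = f y').card
        = ((unifF t ℓ).filter fun f => f x = f y).card := by
    intro y' hy'
    rw [Finset.mem_erase] at hy'
    exact (pair_card_eq t ℓ x y y' hxy (Ne.symm hy'.1)).symm
  have hcarde : (Finset.univ.erase x).card = t - 1 := by
    rw [Finset.card_erase_of_mem (Finset.mem_univ x), Finset.card_univ, Fintype.card_fin]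
  calc (t - 1) * ((unifF t ℓ).filter fun f => f x = f y).card
      = ∑ _y' ∈ Finset.univ.erase x, ((unifF t ℓ).filter fun f => f x = f y).card := by
        rw [Finset.sum_const, hcarde, smul_eq_mul]
    _ = ∑ y' ∈ Finset.univ.erase x, ((unifF t ℓ).filter fun f => f x = f y').card :=
        (Finset.sum_congr rfl hconst).symm
    _ = ∑ f ∈ unifF t ℓ, ((Finset.univ.erase x).filter fun y' => f x = f y').card := hsum
    _ ≤ ∑ _f ∈ unifF t ℓ, t / ℓ := Finset.sum_le_sum hinner
    _ = (unifF t ℓ).card * (t / ℓ) := by rw [Finset.sum_const, smul_eq_mul]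
    _ = (t / ℓ) * (unifF t ℓ).card := Nat.mul_comm _ _
def goodOn {t ℓ : ℕ} (f : Fin t → Fin ℓ) (S : Finset (Fin t)) : Prop :=
  ∀ x ∈ S, ∀ y ∈ S, f x = f y → x = y

instance goodOn.dec {t ℓ : ℕ} (f : Fin t → Fin ℓ) (S : Finset (Fin t)) :
    Decidable (goodOn f S) :=
  inferInstanceAs (Decidable (∀ x ∈ S, ∀ y ∈ S, f x = f y → x = y))

lemma ratio_step {t B G : ℕ} (ht : 64 ≤ t) (h : 2 * ((t - 1) * B) ≤ t * G) :
    63 * B ≤ 32 * G := by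
  have h1 : t * (63 * B) ≤ t * (32 * G) := by
    calc t * (63 * B) = 63 * t * B := by ring
      _ ≤ 64 * (t - 1) * B := Nat.mul_le_mul_right B (by omega)
      _ = 32 * (2 * ((t - 1) * B)) := by ring
      _ ≤ 32 * (t * G) := Nat.mul_le_mul_left 32 h
      _ = t * (32 * G) := by ring
  exact Nat.le_of_mul_le_mul_left h1 (by omega)

lemma bad_bound {t ℓ k : ℕ} (hk : 2 ≤ k) (hkl : k ^ 2 ≤ ℓ) (ht : 64 ≤ t)
    (S : Finset (Fin t)) (hS : S.card = k) :
    63 * ((unifF t ℓ).filter fun f => ¬ goodOn f S).card ≤ 32 * (unifF t ℓ).card := by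
  have hk2 : 4 ≤ k ^ 2 := le_trans (by norm_num) (Nat.pow_le_pow_left hk 2)
  have hl : 0 < ℓ := lt_of_lt_of_le (lt_of_lt_of_le (by norm_num) hk2) hkl
  have hsub : ((unifF t ℓ).filter fun f => ¬ goodOn f S)
      ⊆ (S.offDiag.filter fun p => p.1 < p.2).biUnion
          fun p => (unifF t ℓ).filter fun f => f p.1 = f p.2 := by
    intro f hf
    rw [Finset.mem_filter] at hf
    obtain ⟨hfG, hbad⟩ := hf
    unfold goodOn at hbad
    push_neg at hbad
    obtain ⟨x, hx, y, hy, hfxy, hne⟩ := hbad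
    rw [Finset.mem_biUnion]
    rcases lt_or_gt_of_ne hne with h | h
    · exact ⟨(x, y), Finset.mem_filter.mpr ⟨Finset.mem_offDiag.mpr ⟨hx, hy, hne⟩, h⟩,
        Finset.mem_filter.mpr ⟨hfG, hfxy⟩⟩
    · exact ⟨(y, x), Finset.mem_filter.mpr ⟨Finset.mem_offDiag.mpr ⟨hy, hx, hne.symm⟩, h⟩,
        Finset.mem_filter.mpr ⟨hfG, hfxy.symm⟩⟩
  have hb1 : ((unifF t ℓ).filter fun f => ¬ goodOn f S).card
      ≤ ∑ p ∈ S.offDiag.filter fun p => p.1 < p.2,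
          ((unifF t ℓ).filter fun f => f p.1 = f p.2).card :=
    le_trans (Finset.card_le_card hsub) Finset.card_biUnion_le
  have hPswap : (S.offDiag.filter fun p => p.1 < p.2).card
      = (S.offDiag.filter fun p => ¬ p.1 < p.2).card := by
    apply Finset.card_bij (fun p _ => p.swap)
    · intro p hp
      rw [Finset.mem_filter, Finset.mem_offDiag] at hp
      rw [Finset.mem_filter, Finset.mem_offDiag]
      obtain ⟨⟨h1, h2, h3⟩, h4⟩ := hp
      refine ⟨⟨h2, h1, h3.symm⟩, ?_⟩
      simp only [Prod.fst_swap, Prod.snd_swap]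
      exact not_lt.mpr h4.le
    · intro a _ b _ h
      exact Prod.swap_injective h
    · intro q hq
      rw [Finset.mem_filter, Finset.mem_offDiag] at hq
      obtain ⟨⟨h1, h2, h3⟩, h4⟩ := hq
      refine ⟨q.swap, ?_, by simp⟩
      rw [Finset.mem_filter, Finset.mem_offDiag]
      refine ⟨⟨h2, h1, h3.symm⟩, ?_⟩
      simp only [Prod.fst_swap, Prod.snd_swap]
      rcases lt_or_gt_of_ne h3 with h | h
      · exact absurd h h4
      · exact h
  have hP2 : 2 * (S.offDiag.filter fun p => p.1 < p.2).card = k * k - k := by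
    have h := Finset.card_filter_add_card_filter_not (s := S.offDiag)
      (p := fun p => p.1 < p.2)
    rw [Finset.offDiag_card, hS] at h
    rw [two_mul]
    nth_rewrite 2 [hPswap]
    exact h
  have hmain : (t - 1) * ∑ p ∈ S.offDiag.filter fun p => p.1 < p.2,
        ((unifF t ℓ).filter fun f => f p.1 = f p.2).card
      ≤ (S.offDiag.filter fun p => p.1 < p.2).card * ((t / ℓ) * (unifF t ℓ).card) := by
    rw [Finset.mul_sum]
    calc ∑ p ∈ S.offDiag.filter fun p => p.1 < p.2,
          (t - 1) * ((unifF t ℓ).filter fun f => f p.1 = f p.2).card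
        ≤ ∑ _p ∈ S.offDiag.filter fun p => p.1 < p.2, (t / ℓ) * (unifF t ℓ).card := by
          apply Finset.sum_le_sum
          intro p hp
          rw [Finset.mem_filter, Finset.mem_offDiag] at hp
          exact pair_bound t ℓ hl hp.1.2.2
      _ = _ := by rw [Finset.sum_const, smul_eq_mul]
  have hkk : k * k ≤ ℓ := le_trans (le_of_eq (pow_two k).symm) hkl
  have hfin : 2 * ((t - 1) * ((unifF t ℓ).filter fun f => ¬ goodOn f S).card)
      ≤ t * (unifF t ℓ).card := by
    calc 2 * ((t - 1) * ((unifF t ℓ).filter fun f => ¬ goodOn f S).card)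
        ≤ 2 * ((t - 1) * ∑ p ∈ S.offDiag.filter fun p => p.1 < p.2,
            ((unifF t ℓ).filter fun f => f p.1 = f p.2).card) :=
          Nat.mul_le_mul_left 2 (Nat.mul_le_mul_left _ hb1)
      _ ≤ 2 * ((S.offDiag.filter fun p => p.1 < p.2).card * ((t / ℓ) * (unifF t ℓ).card)) :=
          Nat.mul_le_mul_left 2 hmain
      _ = (2 * (S.offDiag.filter fun p => p.1 < p.2).card) * ((t / ℓ) * (unifF t ℓ).card) := by
          ring
      _ = (k * k - k) * ((t / ℓ) * (unifF t ℓ).card) := by rw [hP2]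
      _ ≤ ℓ * ((t / ℓ) * (unifF t ℓ).card) :=
          Nat.mul_le_mul_right _ (le_trans (Nat.sub_le _ _) hkk)
      _ = ((t / ℓ) * ℓ) * (unifF t ℓ).card := by ring
      _ ≤ t * (unifF t ℓ).card := Nat.mul_le_mul_right _ (Nat.div_mul_le_self t ℓ)
  exact ratio_step ht hfin
def uncov (t ℓ k : ℕ) (F : Finset (Fin t → Fin ℓ)) : Finset (Finset (Fin t)) :=
  (Finset.powersetCard k (Finset.univ : Finset (Fin t))).filter fun S => ∀ f ∈ F, ¬ goodOn f S

lemma avg_step {g b good : ℕ} (h1 : good + b = g) (h2 : 63 * b ≤ 32 * g) :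
    31 * g ≤ 63 * good := by omega

lemma shrink_step {u u' c : ℕ} (h1 : u' + c ≤ u) (h2 : 31 * u ≤ 63 * c) :
    63 * u' ≤ 32 * u := by omega

lemma greedy {t ℓ k : ℕ} (hk : 2 ≤ k) (hkl : k ^ 2 ≤ ℓ) (ht : 64 ≤ t) (m : ℕ) :
    ∃ F : Finset (Fin t → Fin ℓ), F ⊆ unifF t ℓ ∧ F.card ≤ m ∧
      63 ^ m * (uncov t ℓ k F).card
        ≤ 32 ^ m * (Finset.powersetCard k (Finset.univ : Finset (Fin t))).card := by
  have hk2 : 4 ≤ k ^ 2 := le_trans (by norm_num) (Nat.pow_le_pow_left hk 2)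
  have hl : 0 < ℓ := lt_of_lt_of_le (lt_of_lt_of_le (by norm_num) hk2) hkl
  induction m with
  | zero =>
    refine ⟨∅, by simp, le_refl _, ?_⟩
    have : uncov t ℓ k ∅ = Finset.powersetCard k (Finset.univ : Finset (Fin t)) := by
      unfold uncov
      apply Finset.filter_true_of_mem
      intro S _ f hf
      exact absurd hf (Finset.notMem_empty f)
    rw [this]
    simp
  | succ m ih =>
    obtain ⟨F, hFsub, hFcard, hFbound⟩ := ih
    by_cases h0 : (uncov t ℓ k F).card = 0
    · refine ⟨F, hFsub, le_trans hFcard (Nat.le_succ m), ?_⟩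
      rw [h0]
      simp
    · have hGne : (unifF t ℓ).Nonempty := unifF_nonempty t ℓ hl
      have hswap : ∑ f ∈ unifF t ℓ, ((uncov t ℓ k F).filter fun S => goodOn f S).card
          = ∑ S ∈ uncov t ℓ k F, ((unifF t ℓ).filter fun f => goodOn f S).card := by
        simp_rw [Finset.card_filter]
        rw [Finset.sum_comm]
      have hgood : ∀ S ∈ uncov t ℓ k F,
          31 * (unifF t ℓ).card ≤ 63 * ((unifF t ℓ).filter fun f => goodOn f S).card := by
        intro S hS
        have hSk : S.card = k :=
          (Finset.mem_powersetCard.mp (Finset.mem_filter.mp hS).1).2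
        refine avg_step ?_ (bad_bound hk hkl ht S hSk)
        exact Finset.card_filter_add_card_filter_not (p := fun f => goodOn f S)
      have hsumlb : ∑ _f ∈ unifF t ℓ, 31 * (uncov t ℓ k F).card
          ≤ ∑ f ∈ unifF t ℓ, 63 * ((uncov t ℓ k F).filter fun S => goodOn f S).card := by
        calc ∑ _f ∈ unifF t ℓ, 31 * (uncov t ℓ k F).card
            = (unifF t ℓ).card * (31 * (uncov t ℓ k F).card) := by
              rw [Finset.sum_const, smul_eq_mul]
          _ = (uncov t ℓ k F).card * (31 * (unifF t ℓ).card) := by ring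
          _ = ∑ _S ∈ uncov t ℓ k F, 31 * (unifF t ℓ).card := by
              rw [Finset.sum_const, smul_eq_mul]
          _ ≤ ∑ S ∈ uncov t ℓ k F, 63 * ((unifF t ℓ).filter fun f => goodOn f S).card :=
              Finset.sum_le_sum hgood
          _ = 63 * ∑ S ∈ uncov t ℓ k F, ((unifF t ℓ).filter fun f => goodOn f S).card := by
              rw [Finset.mul_sum]
          _ = 63 * ∑ f ∈ unifF t ℓ, ((uncov t ℓ k F).filter fun S => goodOn f S).card := by
              rw [hswap]
          _ = ∑ f ∈ unifF t ℓ, 63 * ((uncov t ℓ k F).filter fun S => goodOn f S).card := by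
              rw [Finset.mul_sum]
      obtain ⟨f, hfG, hf⟩ := Finset.exists_le_of_sum_le hGne hsumlb
      refine ⟨insert f F, Finset.insert_subset hfG hFsub, ?_, ?_⟩
      · exact le_trans (Finset.card_insert_le f F) (Nat.succ_le_succ hFcard)
      · have hsub' : uncov t ℓ k (insert f F)
            ⊆ (uncov t ℓ k F).filter fun S => ¬ goodOn f S := by
          intro S hS
          rw [uncov, Finset.mem_filter] at hS
          rw [Finset.mem_filter, uncov, Finset.mem_filter]
          exact ⟨⟨hS.1, fun g hg => hS.2 g (Finset.mem_insert_of_mem hg)⟩,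
            hS.2 f (Finset.mem_insert_self f F)⟩
        have hcards : ((uncov t ℓ k F).filter fun S => goodOn f S).card
            + ((uncov t ℓ k F).filter fun S => ¬ goodOn f S).card
            = (uncov t ℓ k F).card :=
          Finset.card_filter_add_card_filter_not (p := fun S => goodOn f S)
        have hle : (uncov t ℓ k (insert f F)).card
            + ((uncov t ℓ k F).filter fun S => goodOn f S).card ≤ (uncov t ℓ k F).card := by
          have := Finset.card_le_card hsub'
          omega
        have hstep : 63 * (uncov t ℓ k (insert f F)).card ≤ 32 * (uncov t ℓ k F).card :=
          shrink_step hle hf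
        calc 63 ^ (m + 1) * (uncov t ℓ k (insert f F)).card
            = 63 ^ m * (63 * (uncov t ℓ k (insert f F)).card) := by ring
          _ ≤ 63 ^ m * (32 * (uncov t ℓ k F).card) := Nat.mul_le_mul_left _ hstep
          _ = 32 * (63 ^ m * (uncov t ℓ k F).card) := by ring
          _ ≤ 32 * (32 ^ m * (Finset.powersetCard k (Finset.univ : Finset (Fin t))).card) :=
              Nat.mul_le_mul_left 32 hFbound
          _ = 32 ^ (m + 1) * (Finset.powersetCard k (Finset.univ : Finset (Fin t))).card := by
              ring
lemma main_combi {t ℓ k : ℕ} (hk : 2 ≤ k) (hkl : k ^ 2 ≤ ℓ) (ht : 64 ≤ t) :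
    ∃ F : Finset (Fin t → Fin ℓ), F ⊆ unifF t ℓ ∧
      F.card ≤ 2 * (k * (Nat.log 2 t + 1)) ∧
      ∀ S : Finset (Fin t), S.card = k → ∃ f ∈ F, goodOn f S := by
  obtain ⟨F, h1, h2, h3⟩ := greedy hk hkl ht (2 * (k * (Nat.log 2 t + 1)))
  refine ⟨F, h1, h2, ?_⟩
  intro S hS
  by_contra hno
  push_neg at hno
  have hmem : S ∈ uncov t ℓ k F := by
    rw [uncov, Finset.mem_filter, Finset.mem_powersetCard]
    exact ⟨⟨Finset.subset_univ S, hS⟩, hno⟩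
  have huncov : 1 ≤ (uncov t ℓ k F).card := Finset.card_pos.mpr ⟨S, hmem⟩
  have hN : (Finset.powersetCard k (Finset.univ : Finset (Fin t))).card
      ≤ 2 ^ (k * (Nat.log 2 t + 1)) := by
    rw [Finset.card_powersetCard, Finset.card_univ, Fintype.card_fin]
    calc t.choose k ≤ t ^ k := Nat.choose_le_pow t k
      _ ≤ (2 ^ (Nat.log 2 t + 1)) ^ k :=
          Nat.pow_le_pow_left (le_of_lt (Nat.lt_pow_succ_log_self (by norm_num) t)) k
      _ = 2 ^ (k * (Nat.log 2 t + 1)) := by rw [← pow_mul, Nat.mul_comm]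
  have ha : 1 ≤ k * (Nat.log 2 t + 1) := Nat.one_le_iff_ne_zero.mpr (by positivity)
  set a := k * (Nat.log 2 t + 1) with haa
  have hcontr : 63 ^ (2 * a) ≤ 32 ^ (2 * a) * 2 ^ a := by
    calc 63 ^ (2 * a) = 63 ^ (2 * a) * 1 := (Nat.mul_one _).symm
      _ ≤ 63 ^ (2 * a) * (uncov t ℓ k F).card := Nat.mul_le_mul_left _ huncov
      _ ≤ 32 ^ (2 * a) * (Finset.powersetCard k (Finset.univ : Finset (Fin t))).card := h3
      _ ≤ 32 ^ (2 * a) * 2 ^ a := Nat.mul_le_mul_left _ hN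
  have e1 : (63 : ℕ) ^ (2 * a) = 3969 ^ a := by
    rw [pow_mul]
    norm_num
  have e2 : (32 : ℕ) ^ (2 * a) * 2 ^ a = 2048 ^ a := by
    rw [pow_mul, ← Nat.mul_pow]
    norm_num
  rw [e1, e2] at hcontr
  have hlt : (2048 : ℕ) ^ a < 3969 ^ a :=
    Nat.pow_lt_pow_left (by norm_num) (Nat.one_le_iff_ne_zero.mp ha)
  exact absurd hcontr (not_le.mpr hlt)
/-- There is a constant `C > 0` such that for `n ≥ 16`, `2 ≤ k ≤ (log log n)²` and
`k² ≤ ℓ ≤ ⌈(log log n)⁶⌉`, with `t = ⌈(log log n)⁶⌉`, there is a strongly uniform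
`(t,k,ℓ)`-splitter of size at most `C·k·(1 + log log log n)`. -/
theorem brute_force_splitter :
    ∃ C : ℝ, 0 < C ∧ ∀ n k ℓ : ℕ, 16 ≤ n → 2 ≤ k →
      (k : ℝ) ≤ Real.logb 2 (Real.logb 2 n) ^ 2 →
      k ^ 2 ≤ ℓ → ℓ ≤ ⌈Real.logb 2 (Real.logb 2 n) ^ 6⌉₊ →
      ∀ t : ℕ, t = ⌈Real.logb 2 (Real.logb 2 n) ^ 6⌉₊ →
      ∃ F : Finset (Fin t → Fin ℓ),
        IsSplitter t k ℓ F ∧ IsStronglyUniformFamily t ℓ F ∧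
          (F.card : ℝ) ≤
            C * (k : ℝ) * (1 + Real.logb 2 (Real.logb 2 (Real.logb 2 n))) := by
  refine ⟨12, by norm_num, ?_⟩
  intro n k ℓ hn hk _hkw hkl _hlt t htt
  set w := Real.logb 2 (Real.logb 2 n) with hw_def
  have h2 : (1 : ℝ) < 2 := one_lt_two
  have hn4 : (4 : ℝ) ≤ Real.logb 2 n := by
    have h16 : Real.logb 2 16 = 4 := by
      have e : (16 : ℝ) = 2 ^ (4 : ℕ) := by norm_num
      rw [e, Real.logb_pow, Real.logb_self_eq_one h2]
      norm_num
    have hmono : Real.logb 2 16 ≤ Real.logb 2 n :=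
      Real.logb_le_logb_of_le h2 (by norm_num) (by exact_mod_cast hn)
    linarith
  have hw2 : (2 : ℝ) ≤ w := by
    have h4 : Real.logb 2 4 = 2 := by
      have e : (4 : ℝ) = 2 ^ (2 : ℕ) := by norm_num
      rw [e, Real.logb_pow, Real.logb_self_eq_one h2]
      norm_num
    have hmono : Real.logb 2 4 ≤ Real.logb 2 (Real.logb 2 n) :=
      Real.logb_le_logb_of_le h2 (by norm_num) hn4
    rw [hw_def]
    linarith
  have hwpos : (0 : ℝ) < w := by linarith
  have hL1 : (1 : ℝ) ≤ Real.logb 2 w := by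
    have hmono : Real.logb 2 2 ≤ Real.logb 2 w :=
      Real.logb_le_logb_of_le h2 (by norm_num) hw2
    rw [Real.logb_self_eq_one h2] at hmono
    exact hmono
  have hw6 : (64 : ℝ) ≤ w ^ 6 := by
    have := pow_le_pow_left₀ (by norm_num : (0:ℝ) ≤ 2) hw2 6
    norm_num at this
    linarith
  have ht64 : 64 ≤ t := by
    have h64 : 63 < ⌈w ^ 6⌉₊ := Nat.lt_ceil.mpr (by push_cast; linarith)
    omega
  obtain ⟨F, hFsub, hFcard, hFcover⟩ := main_combi (t := t) hk hkl ht64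
  have hkpos : 0 < k := by omega
  have hklt : k < ℓ := by
    have hkk : k ^ 2 = k * k := sq k
    have h1 : k < k * k := by nlinarith
    omega
  have hl : 0 < ℓ := by omega
  refine ⟨F, ?_, ?_, ?_⟩
  · -- IsSplitter
    intro S hS
    obtain ⟨f, hfF, hgood⟩ := hFcover S hS
    refine ⟨f, hfF, fun i => ?_⟩
    have hc1 : (S.filter fun x => f x = i).card ≤ 1 := by
      rw [Finset.card_le_one]
      intro x hx y hy
      rw [Finset.mem_filter] at hx hy
      exact hgood x hx.1 y hy.1 (hx.2.trans hy.2.symm)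
    have hd0 : k / ℓ = 0 := Nat.div_eq_of_lt hklt
    have hd1 : 1 ≤ (k + ℓ - 1) / ℓ := by
      rw [Nat.one_le_div_iff hl]
      omega
    exact ⟨by omega, by omega⟩
  · -- strongly uniform
    intro f hf
    have := hFsub hf
    rw [unifF, Finset.mem_filter] at this
    exact this.2
  · -- cardinality bound
    have htpos : 0 < t := by omega
    have hlogle : (Nat.log 2 t : ℝ) ≤ Real.logb 2 t := by
      have h1 : ((2 : ℕ) : ℝ) ^ (Nat.log 2 t) ≤ (t : ℝ) := by
        exact_mod_cast Nat.pow_log_le_self 2 (by omega)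
      have h1' : (2 : ℝ) ^ (Nat.log 2 t) ≤ (t : ℝ) := by exact_mod_cast h1
      calc (Nat.log 2 t : ℝ) = Real.logb 2 ((2 : ℝ) ^ (Nat.log 2 t)) := by
            rw [Real.logb_pow, Real.logb_self_eq_one h2, mul_one]
        _ ≤ Real.logb 2 t := Real.logb_le_logb_of_le h2 (by positivity) h1'
    have htle : (t : ℝ) ≤ 2 * w ^ 6 := by
      have hceil : (⌈w ^ 6⌉₊ : ℝ) < w ^ 6 + 1 := Nat.ceil_lt_add_one (by positivity)
      have : (t : ℝ) = (⌈w ^ 6⌉₊ : ℝ) := by rw [htt]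
      nlinarith
    have hlogt : Real.logb 2 t ≤ 1 + 6 * Real.logb 2 w := by
      have hctpos : (0 : ℝ) < (t : ℝ) := by exact_mod_cast htpos
      calc Real.logb 2 t ≤ Real.logb 2 (2 * w ^ 6) :=
            Real.logb_le_logb_of_le h2 hctpos htle
        _ = Real.logb 2 2 + Real.logb 2 (w ^ 6) :=
            Real.logb_mul (by norm_num) (by positivity)
        _ = 1 + 6 * Real.logb 2 w := by
            rw [Real.logb_self_eq_one h2, Real.logb_pow]
            norm_num
    have hk0 : (0 : ℝ) ≤ (k : ℝ) := Nat.cast_nonneg k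
    calc (F.card : ℝ) ≤ (2 * (k * (Nat.log 2 t + 1)) : ℕ) := by exact_mod_cast hFcard
      _ = 2 * (k : ℝ) * ((Nat.log 2 t : ℝ) + 1) := by push_cast; ring
      _ ≤ 2 * (k : ℝ) * ((1 + 6 * Real.logb 2 w) + 1) := by
          apply mul_le_mul_of_nonneg_left _ (by positivity)
          linarith
      _ ≤ 12 * (k : ℝ) * (1 + Real.logb 2 w) := by nlinarith
end

section
/- For every real c > 0 there exists an integer k′ such that for every integer k ≥ k′, taking n = ⌈c·k³⌉, there exists an (n, k, 1/√k)-bisector of size at most 6·k·e^{√k}·ln(c·k). -/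
/-!
The bisector consists of the indicators of `t` random `M`-subsets of `[n]`, `M = ⌈n/√k⌉`.
A fixed `k`-set avoids a random `M`-set with probability
`C(n-k, M) / C(n, M) ≥ (1 - (M+k)/n)^k ≥ e^{-(√k + 0.6)}`, the last step because `n ≥ 100 k²`
makes `(M+k)/n ≈ 1/√k` and `-ln(1 - u) ≤ u + 0.53 u²` for small `u`. A union bound over the
`C(n, k) ≤ n^k` sets `S` shows that `t ≈ k ln n · e^{√k + 0.6}` sets suffice. With `n ≈ c k³`,
`ln n ≈ 3 ln(ck)`, and `3 e^{0.6} < 6` leaves room for the lower-order terms once `k` is large.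
-/

open Finset Real Filter

/-- An `(n,k,α)`-bisector: every function maps exactly `⌈α·n⌉` elements to `1`,
and every `k`-subset of `[n]` is mapped entirely to `0` by some function. -/
def IsBisector (n k : ℕ) (α : ℝ) (F : Finset (Fin n → Fin 2)) : Prop :=
  (∀ f ∈ F, (Finset.univ.filter fun x => f x = 1).card = ⌈α * (n : ℝ)⌉₊) ∧
  ∀ S : Finset (Fin n), S.card = k → ∃ f ∈ F, ∀ x ∈ S, f x = 0

section Covering

variable {α : Type*} [Fintype α] [DecidableEq α]

theorem card_powersetCard_sdiff_compl (M : ℕ) (S : Finset α) :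
    #((univ : Finset α).powersetCard M \ Sᶜ.powersetCard M) =
      (Fintype.card α).choose M - (Fintype.card α - #S).choose M := by
  rw [card_sdiff_of_subset (powersetCard_mono (subset_univ _)), card_powersetCard,
    card_powersetCard, card_univ, card_compl]

theorem exists_forall_exists_disjoint_of_choose_mul_lt {k M t : ℕ}
    (h : (Fintype.card α).choose k *
        ((Fintype.card α).choose M - (Fintype.card α - k).choose M) ^ t <
      (Fintype.card α).choose M ^ t) :
    ∃ 𝒜 : Finset (Finset α), #𝒜 ≤ t ∧ (∀ A ∈ 𝒜, #A = M) ∧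
      ∀ S : Finset α, #S = k → ∃ A ∈ 𝒜, Disjoint A S := by
  set Ω := (univ : Finset α).powersetCard M
  set bad := (univ.powersetCard k).biUnion
    fun S : Finset α => Fintype.piFinset fun _ : Fin t => Ω \ Sᶜ.powersetCard M
  have hbad : #bad < #(Fintype.piFinset fun _ : Fin t => Ω) := by
    refine card_biUnion_le.trans_lt ?_
    rw [sum_congr rfl fun S hS => by
      rw [Fintype.card_piFinset, card_powersetCard_sdiff_compl, mem_powersetCard_univ.1 hS]]
    simpa [Fintype.card_piFinset, Ω] using h
  obtain ⟨g, hgΩ, hgbad⟩ := exists_mem_notMem_of_card_lt_card hbad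
  rw [Fintype.mem_piFinset] at hgΩ
  refine ⟨univ.image g, card_image_le.trans (by simp), ?_, fun S hS => ?_⟩
  · simp only [mem_image, mem_univ, true_and, forall_exists_index, forall_apply_eq_imp_iff]
    exact fun i => mem_powersetCard_univ.1 (hgΩ i)
  · have : ¬ ∀ i, g i ∈ Ω \ Sᶜ.powersetCard M := fun hall =>
      hgbad (mem_biUnion.2 ⟨S, mem_powersetCard_univ.2 hS, Fintype.mem_piFinset.2 hall⟩)
    obtain ⟨i, hi⟩ := not_forall.1 this
    have hgood : g i ∈ Sᶜ.powersetCard M := by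
      by_contra hnot
      exact hi (mem_sdiff.2 ⟨hgΩ i, hnot⟩)
    exact ⟨g i, mem_image_of_mem g (mem_univ i),
      subset_compl_iff_disjoint_right.1 (mem_powersetCard.1 hgood).1⟩

end Covering

theorem exists_isBisector_card_le {n k t : ℕ} {α : ℝ}
    (h : n.choose k * (n.choose ⌈α * n⌉₊ - (n - k).choose ⌈α * n⌉₊) ^ t <
      n.choose ⌈α * n⌉₊ ^ t) :
    ∃ F : Finset (Fin n → Fin 2), IsBisector n k α F ∧ #F ≤ t := by
  rw [← Fintype.card_fin n] at h
  obtain ⟨𝒜, h𝒜t, h𝒜M, h𝒜S⟩ := exists_forall_exists_disjoint_of_choose_mul_lt h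
  have hind (A : Finset (Fin n)) :
      univ.filter (fun x => (if x ∈ A then 1 else 0 : Fin 2) = 1) = A := by
    ext x; by_cases hx : x ∈ A <;> simp [hx]
  refine ⟨𝒜.image fun A x => if x ∈ A then 1 else 0, ⟨?_, fun S hS => ?_⟩,
    card_image_le.trans h𝒜t⟩
  · simp only [mem_image, forall_exists_index, and_imp, forall_apply_eq_imp_iff₂, hind]
    exact fun A hA => by simpa using h𝒜M A hA
  · obtain ⟨A, hA, hdisj⟩ := h𝒜S S hS
    exact ⟨_, mem_image_of_mem _ hA, fun x hx => by simp [disjoint_right.1 hdisj hx]⟩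

theorem exp_neg_add_sq_le_one_sub {u : ℝ} (h0 : 0 ≤ u) (h1 : u ≤ 1 / 50) :
    exp (-(u + 0.53 * u ^ 2)) ≤ 1 - u := by
  have habs : |u| = u := abs_of_nonneg h0
  have hlog := abs_log_sub_add_sum_range_le (show |u| < 1 by rw [habs]; linarith) 2
  simp only [sum_range_succ, sum_range_zero, habs] at hlog
  have htail : u ^ 3 / (1 - u) ≤ 0.03 * u ^ 2 := by
    rw [div_le_iff₀ (by linarith)]
    nlinarith [sq_nonneg u, mul_nonneg (sq_nonneg u) h0]
  rw [← le_log_iff_exp_le (by linarith)]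
  norm_num at hlog
  linarith [(abs_le.1 hlog).1]

theorem exp_three_fifths_lt_two : exp 0.6 < 2 := by
  refine (pow_lt_pow_iff_left₀ (exp_pos _).le (by norm_num) (by norm_num : (5 : ℕ) ≠ 0)).1 ?_
  calc exp 0.6 ^ 5 = exp 1 ^ 3 := by rw [← exp_nat_mul, ← exp_nat_mul]; norm_num
    _ < 3 ^ 3 := by gcongr; exact exp_one_lt_three
    _ < 2 ^ 5 := by norm_num

theorem mul_sub_pow_lt_pow {N A B : ℝ} {t : ℕ} (hN : 0 < N) (hA : 0 < A) (hAB : A ≤ B)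
    (ht : log N * (B / A) < t) : N * (B - A) ^ t < B ^ t := by
  have hB : 0 < B := hA.trans_le hAB
  have hstep : B - A ≤ B * exp (-(A / B)) := by
    calc B - A = B * (1 - A / B) := by field_simp
      _ ≤ B * exp (-(A / B)) := by gcongr; exact one_sub_le_exp_neg _
  have hexp : log N < t * (A / B) :=
    calc log N = log N * (B / A) * (A / B) := by field_simp
      _ < t * (A / B) := by gcongr
  calc N * (B - A) ^ t ≤ N * (B * exp (-(A / B))) ^ t := by
        gcongr
    _ = B ^ t * exp (log N - t * (A / B)) := by
        rw [mul_pow, ← exp_nat_mul, exp_sub, exp_log hN, mul_neg, exp_neg, div_eq_mul_inv]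
        ring
    _ < B ^ t := by
        apply mul_lt_of_lt_one_right (by positivity)
        rw [exp_lt_one_iff]
        linarith

theorem cast_choose_mul_one_sub_div {m M : ℕ} (hm : 0 < m) (hM : M ≤ m) :
    (m.choose M : ℝ) * (1 - M / m) = (m - 1).choose M := by
  have h := Nat.choose_mul_succ_eq (m - 1) M
  rw [Nat.sub_add_cancel hm] at h
  have hmR : (0 : ℝ) < m := by exact_mod_cast hm
  rw [one_sub_div hmR.ne', ← mul_div_assoc, div_eq_iff hmR.ne']
  have hR := congrArg (Nat.cast : ℕ → ℝ) h
  push_cast [Nat.cast_sub hM] at hR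
  linarith

theorem cast_choose_mul_one_sub_pow_le {n k M : ℕ} (h : M + k ≤ n) :
    (n.choose M : ℝ) * (1 - (M + k) / n) ^ k ≤ (n - k).choose M := by
  suffices ∀ j ≤ k, (n.choose M : ℝ) * (1 - (M + k) / n) ^ j ≤ (n - j).choose M from
    this k le_rfl
  intro j hj
  induction j with
  | zero => simp
  | succ j ih =>
    have hnj : 0 < n - j := by omega
    have hfactor : 1 - (M + k) / (n : ℝ) ≤ 1 - M / ((n - j : ℕ) : ℝ) := by
      have hnR : (0 : ℝ) < n := by exact_mod_cast (show 0 < n by omega)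
      have hnjR : (0 : ℝ) < ((n - j : ℕ) : ℝ) := by exact_mod_cast hnj
      rw [sub_le_sub_iff_left, div_le_div_iff₀ hnjR hnR]
      push_cast [show j ≤ n by omega]
      have : (j : ℝ) + 1 ≤ k := by exact_mod_cast hj
      have : (M : ℝ) + j ≤ n := by exact_mod_cast (show M + j ≤ n by omega)
      nlinarith
    calc (n.choose M : ℝ) * (1 - (M + k) / n) ^ (j + 1)
        = (n.choose M : ℝ) * (1 - (M + k) / n) ^ j * (1 - (M + k) / n) := by ring
      _ ≤ (n - j).choose M * (1 - M / ((n - j : ℕ) : ℝ)) := by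
        gcongr
        · rw [sub_nonneg, div_le_one (by exact_mod_cast (show 0 < n by omega))]
          exact_mod_cast h
        · exact ih (by omega)
      _ = (n - (j + 1)).choose M := by
        rw [cast_choose_mul_one_sub_div hnj (by omega)]; rfl

theorem le_and_sq_mul_add_sq_le_of_sq_mul_le {s u : ℝ} (hs : 100 ≤ s) (hu : 0 ≤ u)
    (h : s ^ 2 * u ≤ s + 1 / 50) : u ≤ 1 / 50 ∧ s ^ 2 * (u + 0.53 * u ^ 2) ≤ s + 0.6 := by
  have hsu : s * u ≤ 1 + 1 / 5000 := by nlinarith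
  refine ⟨by nlinarith, ?_⟩
  nlinarith [mul_le_mul hsu hsu (by positivity) (by norm_num)]

theorem mul_ceil_add_le {n k : ℕ} (hk : 1 ≤ k) (hn : 100 * k ^ 2 ≤ n) :
    (k : ℝ) * (⌈1 / √k * n⌉₊ + k) ≤ (√k + 1 / 50) * n := by
  have hkR : (1 : ℝ) ≤ k := by exact_mod_cast hk
  have hnR : 100 * (k : ℝ) ^ 2 ≤ n := by exact_mod_cast hn
  have hs : √(k : ℝ) ^ 2 = k := sq_sqrt (by positivity)
  have hs0 : 0 < √(k : ℝ) := by positivity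
  have hM : (⌈1 / √k * n⌉₊ : ℝ) < 1 / √k * n + 1 := Nat.ceil_lt_add_one (by positivity)
  have hkM : (k : ℝ) * (1 / √k * n) = √k * n := by
    field_simp
    linear_combination (-(n : ℝ)) * hs
  nlinarith

theorem cast_choose_le_exp_mul_choose {n k : ℕ} (hk : 10000 ≤ k) (hn : 100 * k ^ 2 ≤ n) :
    ⌈1 / √k * n⌉₊ + k ≤ n ∧
      (n.choose ⌈1 / √k * n⌉₊ : ℝ) ≤ exp (√k + 0.6) * (n - k).choose ⌈1 / √k * n⌉₊ := by
  set M := ⌈1 / √k * n⌉₊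
  have hnR : (0 : ℝ) < n := by exact_mod_cast (show 0 < n by nlinarith)
  have hs : √(k : ℝ) ^ 2 = k := sq_sqrt (by positivity)
  have hs100 : 100 ≤ √(k : ℝ) := by
    rw [le_sqrt' (by norm_num)]
    exact_mod_cast (by omega : 100 ^ 2 ≤ k)
  set u : ℝ := (M + k) / n
  have hsu : √(k : ℝ) ^ 2 * u ≤ √k + 1 / 50 := by
    rw [hs, ← mul_div_assoc, div_le_iff₀ hnR]
    exact mul_ceil_add_le (by omega) hn
  obtain ⟨hu, hquad⟩ := le_and_sq_mul_add_sq_le_of_sq_mul_le hs100 (by positivity) hsu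
  have hMk : M + k ≤ n := by
    have : (M : ℝ) + k ≤ n := by
      rw [div_le_iff₀ hnR] at hu; linarith
    exact_mod_cast this
  refine ⟨hMk, ?_⟩
  have hpow : exp (-(√k + 0.6)) ≤ (1 - u) ^ k :=
    calc exp (-(√k + 0.6)) ≤ exp (-(u + 0.53 * u ^ 2)) ^ k := by
          rw [hs] at hquad
          rw [← exp_nat_mul, exp_le_exp]; linarith
      _ ≤ (1 - u) ^ k := by gcongr; exact exp_neg_add_sq_le_one_sub (by positivity) hu
  calc (n.choose M : ℝ) = exp (√k + 0.6) * (n.choose M * exp (-(√k + 0.6))) := by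
        rw [mul_left_comm, ← exp_add, add_neg_cancel, exp_zero, mul_one]
    _ ≤ exp (√k + 0.6) * (n.choose M * (1 - u) ^ k) := by gcongr
    _ ≤ exp (√k + 0.6) * (n - k).choose M := by
        gcongr; exact cast_choose_mul_one_sub_pow_le hMk

theorem exists_isBisector_card_le_exp {n k : ℕ} (hk : 10000 ≤ k) (hn : 100 * k ^ 2 ≤ n) :
    ∃ F : Finset (Fin n → Fin 2), IsBisector n k (1 / √k) F ∧
      (#F : ℝ) ≤ k * log n * exp (√k + 0.6) + 1 := by
  set M := ⌈1 / √k * n⌉₊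
  obtain ⟨hMk, hratio⟩ := cast_choose_le_exp_mul_choose hk hn
  set A : ℝ := ↑((n - k).choose M)
  set B : ℝ := ↑(n.choose M)
  have hA : 0 < A := Nat.cast_pos.2 (Nat.choose_pos (by omega))
  have hAB : A ≤ B := Nat.cast_le.2 (Nat.choose_le_choose M (Nat.sub_le n k))
  have hlogn : 0 ≤ log n := log_natCast_nonneg n
  set y := k * log n * (B / A)
  have hy : 0 ≤ y := by positivity
  set t := ⌊y⌋₊ + 1
  have hcover : n.choose k * (n.choose M - (n - k).choose M) ^ t < n.choose M ^ t := by
    have hN : (0 : ℝ) < n.choose k := by exact_mod_cast Nat.choose_pos (by omega)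
    have hlogN : log (n.choose k) ≤ k * log n := by
      rw [← log_pow]
      exact log_le_log hN (by exact_mod_cast Nat.choose_le_pow n k)
    have key := mul_sub_pow_lt_pow hN hA hAB <|
      calc log (n.choose k) * (B / A) ≤ k * log n * (B / A) := by gcongr
        _ < t := by simpa [t] using Nat.lt_floor_add_one y
    refine (Nat.cast_lt (α := ℝ)).1 ?_
    push_cast [Nat.choose_le_choose M (Nat.sub_le n k)]
    exact key
  obtain ⟨F, hF, hFt⟩ := exists_isBisector_card_le hcover
  refine ⟨F, hF, ?_⟩
  calc (#F : ℝ) ≤ t := by exact_mod_cast hFt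
    _ ≤ y + 1 := by simpa [t] using Nat.floor_le hy
    _ ≤ k * log n * exp (√k + 0.6) + 1 := by
        gcongr k * log n * ?_ + 1
        rw [div_le_iff₀ hA]; exact hratio

theorem sq_mul_le_ceil_mul_pow_three {c : ℝ} {k : ℕ} (hck : 100 ≤ c * k) :
    100 * k ^ 2 ≤ ⌈c * (k : ℝ) ^ 3⌉₊ := by
  refine Nat.cast_le.1 (le_trans ?_ (Nat.le_ceil _))
  push_cast
  nlinarith [sq_nonneg (k : ℝ)]

theorem log_ceil_mul_pow_three_le {c : ℝ} {k : ℕ} (hc : 0 < c) (hck : 1 ≤ c * k) :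
    log ⌈c * (k : ℝ) ^ 3⌉₊ ≤ 3 * log (c * k) + log (2 / c ^ 2) := by
  have hk : (1 : ℝ) ≤ k := Nat.one_le_cast.2 <| Nat.pos_of_ne_zero <| by
    rintro rfl
    simp at hck
    linarith
  have hcube : 1 ≤ c * (k : ℝ) ^ 3 := by nlinarith [one_le_pow₀ (n := 2) hk]
  have hceil : (⌈c * (k : ℝ) ^ 3⌉₊ : ℝ) ≤ (c * k) ^ 3 * (2 / c ^ 2) := by
    have := Nat.ceil_lt_add_one (show 0 ≤ c * (k : ℝ) ^ 3 by linarith)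
    field_simp
    nlinarith
  calc log ⌈c * (k : ℝ) ^ 3⌉₊ ≤ log ((c * k) ^ 3 * (2 / c ^ 2)) :=
        log_le_log (by positivity) hceil
    _ = 3 * log (c * k) + log (2 / c ^ 2) := by
        rw [log_mul (by positivity) (by positivity), log_pow]; norm_num

/-- For every `c > 0` there is `k'` such that for all `k ≥ k'`, with `n = ⌈c·k³⌉`,
there is an `(n, k, 1/√k)`-bisector of size at most `6·k·e^{√k}·ln(c·k)`. -/
theorem bisector_small_universe (c : ℝ) (hc : 0 < c) :
    ∃ k' : ℕ, ∀ k : ℕ, k' ≤ k →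
      ∃ F : Finset (Fin ⌈c * (k : ℝ) ^ 3⌉₊ → Fin 2),
        IsBisector ⌈c * (k : ℝ) ^ 3⌉₊ k (1 / Real.sqrt k) F ∧
          (F.card : ℝ) ≤
            6 * (k : ℝ) * Real.exp (Real.sqrt k) * Real.log (c * (k : ℝ)) := by
  have hlim : Tendsto (fun k : ℕ => c * k) atTop atTop :=
    tendsto_natCast_atTop_atTop.const_mul_atTop hc
  have hε : 0 < 6 - 3 * exp 0.6 := by linarith [exp_three_fifths_lt_two]
  obtain ⟨k', hk'⟩ := eventually_atTop.1 <| (eventually_ge_atTop 10000).and <|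
    (hlim.eventually_ge_atTop 100).and <|
      ((tendsto_log_atTop.comp hlim).const_mul_atTop hε).eventually_ge_atTop
        (exp 0.6 * log (2 / c ^ 2) + 1)
  refine ⟨k', fun k hk => ?_⟩
  obtain ⟨hk, hck, hlog : _ ≤ _ * log (c * k)⟩ := hk' k hk
  obtain ⟨F, hF, hcard⟩ := exists_isBisector_card_le_exp hk (sq_mul_le_ceil_mul_pow_three hck)
  refine ⟨F, hF, hcard.trans ?_⟩
  have hlogn := log_ceil_mul_pow_three_le (k := k) hc (by linarith)
  set n := ⌈c * (k : ℝ) ^ 3⌉₊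
  have hke : 1 ≤ (k : ℝ) * exp √k :=
    one_le_mul_of_one_le_of_one_le (by exact_mod_cast (by omega : 1 ≤ k))
      (one_le_exp (sqrt_nonneg _))
  calc k * log n * exp (√k + 0.6) + 1 ≤ k * exp √k * (exp 0.6 * log n + 1) := by
        rw [exp_add]; nlinarith
    _ ≤ k * exp √k * (6 * log (c * k)) := by
        gcongr
        nlinarith [mul_le_mul_of_nonneg_left hlogn (exp_pos 0.6).le]
    _ = 6 * k * exp √k * log (c * k) := by ring
end

section
/- Let n, k, d be positive integers with d·(k+1) < n, and let 0 ≤ α ≤ 1 be real. If there exists an (n,k,α)-bisector F, then there exists an (n+d,k,α)-bisector of size at most (k+1)·|F|. -/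
open Finset

lemma Nat.ceil_mul_add_le {α : ℝ} (hα : α ≤ 1) (n d : ℕ) :
    ⌈α * ↑(n + d)⌉₊ ≤ ⌈α * n⌉₊ + d :=
  calc ⌈α * ↑(n + d)⌉₊ ≤ ⌈α * n + d⌉₊ := by
        gcongr; push_cast; nlinarith
    _ ≤ ⌈α * n⌉₊ + ⌈(d : ℝ)⌉₊ := Nat.ceil_add_le _ _
    _ = ⌈α * n⌉₊ + d := by rw [Nat.ceil_natCast]

lemma exists_lt_forall_notMem_Ico (S : Finset ℕ) {k : ℕ} (hS : #S ≤ k) (d : ℕ) :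
    ∃ j < k + 1, ∀ x ∈ S, x ∉ Ico (j * d) (j * d + d) := by
  have : #(S.image (· / d)) < #(range (k + 1)) := by
    rw [card_range]; exact (card_image_le.trans hS).trans_lt k.lt_succ_self
  obtain ⟨j, hj, hjS⟩ := exists_mem_notMem_of_card_lt_card this
  refine ⟨j, mem_range.1 hj, fun x hx hxj => hjS (mem_image.2 ⟨x, hx, ?_⟩)⟩
  obtain ⟨hjx, hxj⟩ := mem_Ico.1 hxj
  exact Nat.div_eq_of_lt_le hjx (by rwa [add_one_mul])

lemma card_filter_comp_equiv {α β : Type*} [Fintype α] [Fintype β] (e : α ≃ β) (p : β → Prop)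
    [DecidablePred p] : #{x | p (e x)} = #{y | p y} := by
  simp only [card_filter]; exact e.sum_comp fun y => if p y then 1 else 0

section BlockSwap

variable {n d j : ℕ}

def blockSwap (n d j x : ℕ) : ℕ :=
  if j * d ≤ x ∧ x < j * d + d then n + (x - j * d)
  else if n ≤ x then j * d + (x - n) else x

lemma blockSwap_lt (hj : j * d + d ≤ n) {x : ℕ} (hx : x < n + d) :
    blockSwap n d j x < n + d := by
  unfold blockSwap; split_ifs <;> omega

lemma blockSwap_blockSwap (hj : j * d + d ≤ n) {x : ℕ} (hx : x < n + d) :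
    blockSwap n d j (blockSwap n d j x) = x := by
  unfold blockSwap; split_ifs <;> omega

lemma blockSwap_lt_of_notMem_Ico (hj : j * d + d ≤ n) {x : ℕ} (hx : x < n + d)
    (hxj : x ∉ Ico (j * d) (j * d + d)) : blockSwap n d j x < n := by
  rw [mem_Ico] at hxj
  unfold blockSwap; split_ifs <;> omega

def blockSwapPerm (hj : j * d + d ≤ n) : Equiv.Perm (Fin (n + d)) :=
  Function.Involutive.toPerm (fun x => ⟨blockSwap n d j x, blockSwap_lt hj x.2⟩)
    fun x => Fin.ext (blockSwap_blockSwap hj x.2)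

end BlockSwap

def padOnes {n : ℕ} (d m : ℕ) (f : Fin n → Fin 2) : Fin (n + d) → Fin 2 :=
  Fin.append f fun i => if (i : ℕ) < m then 1 else 0

lemma card_padOnes {n d m : ℕ} (hm : m ≤ d) (f : Fin n → Fin 2) :
    #{x | padOnes d m f x = 1} = #{y | f y = 1} + m := by
  have : #{i : Fin d | (if (i : ℕ) < m then 1 else 0 : Fin 2) = 1} = m := by
    simpa [hm] using Fin.card_filter_val_lt (n := d) (m := m)
  rw [card_filter, card_filter, Fin.sum_univ_add]
  simp only [padOnes, Fin.append_left, Fin.append_right, ← card_filter, this]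

lemma padOnes_castAdd {n d m : ℕ} (f : Fin n → Fin 2) (y : Fin n) :
    padOnes d m f (Fin.castAdd d y) = f y :=
  Fin.append_left _ _ y

lemma exists_map_blockSwapPerm_eq_map_castAdd {n d j : ℕ} (hj : j * d + d ≤ n)
    (S : Finset (Fin (n + d))) (hS : ∀ x ∈ S, (x : ℕ) ∉ Ico (j * d) (j * d + d)) :
    ∃ T : Finset (Fin n), S.map (blockSwapPerm hj).toEmbedding = T.map (Fin.castAddEmb d) := by
  have : S.map (blockSwapPerm hj).toEmbedding ⊆ univ.map (Fin.castAddEmb d) := by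
    simp only [subset_iff, mem_map, mem_univ, true_and, forall_exists_index, and_imp,
      forall_apply_eq_imp_iff₂]
    exact fun x hx => ⟨⟨_, blockSwap_lt_of_notMem_Ico hj x.2 (hS x hx)⟩, rfl⟩
  obtain ⟨T, -, hT⟩ := subset_map_iff.1 this
  exact ⟨T, hT⟩

theorem bisector_extend_by_d_general (n k d : ℕ)
    (hdk : d * (k + 1) < n) (α : ℝ) (hα0 : 0 ≤ α) (hα1 : α ≤ 1)
    (F : Finset (Fin n → Fin 2)) (hF : IsBisector n k α F) :
    ∃ F' : Finset (Fin (n + d) → Fin 2),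
      IsBisector (n + d) k α F' ∧ F'.card ≤ (k + 1) * F.card := by
  obtain ⟨hF_card, hF_cover⟩ := hF
  set m := ⌈α * ↑(n + d)⌉₊ - ⌈α * n⌉₊
  have hceil : ⌈α * n⌉₊ ≤ ⌈α * ↑(n + d)⌉₊ := by gcongr; linarith
  have hm : m ≤ d := by have := Nat.ceil_mul_add_le hα1 n d; omega
  have hblock (j : Fin (k + 1)) : (j : ℕ) * d + d ≤ n := by nlinarith [j.isLt]
  refine ⟨(F ×ˢ univ).image fun p => padOnes d m p.1 ∘ blockSwapPerm (hblock p.2), ⟨?_, ?_⟩, ?_⟩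
  · simp only [forall_mem_image, mem_product, Prod.forall]
    rintro f j ⟨hf, -⟩
    rw [Function.comp_def, card_filter_comp_equiv (blockSwapPerm (hblock j)) (padOnes d m f · = 1),
      card_padOnes hm, hF_card f hf]
    omega
  · intro S hS
    obtain ⟨j, hjk, hj⟩ :=
      exists_lt_forall_notMem_Ico (S.image Fin.val) (card_image_le.trans hS.le) d
    obtain ⟨T, hT⟩ := exists_map_blockSwapPerm_eq_map_castAdd (hblock ⟨j, hjk⟩) S
      fun x hx => hj x (mem_image_of_mem _ hx)
    obtain ⟨f, hf, hfT⟩ := hF_cover T (by rw [← card_map (Fin.castAddEmb d), ← hT, card_map, hS])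
    refine ⟨_, mem_image_of_mem _ (mk_mem_product hf (mem_univ ⟨j, hjk⟩)), fun x hx => ?_⟩
    obtain ⟨y, hy, hxy⟩ := mem_map.1 (hT ▸ mem_map_of_mem _ hx)
    rw [Function.comp_apply, ← Equiv.coe_toEmbedding, ← hxy, Fin.castAddEmb_apply, padOnes_castAdd]
    exact hfT y hy
  · calc _ ≤ #(F ×ˢ (univ : Finset (Fin (k + 1)))) := card_image_le
      _ = (k + 1) * #F := by rw [card_product, card_univ, Fintype.card_fin, mul_comm]

/-- If `d·(k+1) < n` and there is an `(n,k,α)`-bisector `F`, then there is an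
`(n+d,k,α)`-bisector of size at most `(k+1)·|F|`. -/
theorem bisector_extend_by_d (n k d : ℕ) (hn : 0 < n) (hk : 0 < k) (hd : 0 < d)
    (hdk : d * (k + 1) < n) (α : ℝ) (hα0 : 0 ≤ α) (hα1 : α ≤ 1)
    (F : Finset (Fin n → Fin 2)) (hF : IsBisector n k α F) :
    ∃ F' : Finset (Fin (n + d) → Fin 2),
      IsBisector (n + d) k α F' ∧ F'.card ≤ (k + 1) * F.card :=
  bisector_extend_by_d_general n k d hdk α hα0 hα1 F hF
end

section
/- Let n₁, n₂, k be positive integers with k ≤ n₂ ≤ n₁ and (k+1)·(n₁ mod n₂) < ⌊n₁/n₂⌋·n₂, and let 0 ≤ α ≤ 1 be real. If there exists an (n₂,k,α)-bisector F, then there exists an (n₁,k,α)-bisector of size at most (k+1)·|F|. -/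
open Finset

/-!
Write `n₁ = q·n₂ + r` and `mᵢ = ⌈α·nᵢ⌉`, so that `m₁ ≤ q·m₂ + r`. Blowing up each one-set of
`F` along `q` disjoint copies of `[n₂]` and trimming it to `m₁ - e` points, where
`e = m₁ - q·m₂ ≤ r`, gives a family one of whose members avoids any given `k` points, and all of
whose members miss a window `E` of `e` further points. Adding `E` and rotating by the multiples
`j·e` (`j ≤ k`) in `ℤ/n₁` yields sets of size `m₁`. As `(k+1)·e ≤ (k+1)·r < n₁`, the `k+1`
rotated copies of `E` are disjoint, so a `k`-set `S` misses one of them, and `S` rotated back is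
avoided by a blown-up set.
-/

open Function
open scoped Pointwise

lemma Nat.ceil_mul_le_div_mul_ceil_add_mod {α : ℝ} (hα : α ≤ 1) (a b : ℕ) :
    ⌈α * a⌉₊ ≤ a / b * ⌈α * b⌉₊ + a % b := by
  refine Nat.ceil_le.mpr ?_
  have hab : (a : ℝ) = (a / b : ℕ) * b + (a % b : ℕ) := by
    exact_mod_cast (Nat.div_add_mod' a b).symm
  have hb : α * b ≤ ⌈α * b⌉₊ := Nat.le_ceil _
  have hr : α * (a % b : ℕ) ≤ (a % b : ℕ) := mul_le_of_le_one_left (Nat.cast_nonneg _) hα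
  calc α * a = (a / b : ℕ) * (α * b) + α * (a % b : ℕ) := by rw [hab]; ring
    _ ≤ (a / b : ℕ) * ⌈α * b⌉₊ + (a % b : ℕ) := by gcongr
    _ = _ := by push_cast; ring

lemma Finset.exists_disjoint_of_card_lt {V ι : Type*} [Fintype ι] {A : ι → Finset V}
    (hA : Pairwise (Disjoint on A)) {S : Finset V} (hS : #S < Fintype.card ι) :
    ∃ i, Disjoint S (A i) := by
  by_contra! hmeet
  choose x hxS hxA using fun i => not_disjoint_iff.mp (hmeet i)
  obtain ⟨i, -, j, -, hij, hx⟩ :=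
    exists_ne_map_eq_of_card_lt_of_maps_to (s := univ) (f := x) hS fun i _ => hxS i
  exact disjoint_left.mp (hA hij) (hxA i) (hx ▸ hxA j)

lemma Finset.disjoint_vadd_finset_right {G V : Type*} [AddGroup G] [AddAction G V] [DecidableEq V]
    {S T : Finset V} {c : G} : Disjoint S (c +ᵥ T) ↔ Disjoint (-c +ᵥ S) T := by
  rw [← disjoint_coe, coe_vadd_finset, Set.disjoint_vadd_set_right, ← coe_vadd_finset,
    disjoint_coe]

section Indicator

variable {V : Type*} [Fintype V]

def ones (f : V → Fin 2) : Finset V := univ.filter (f · = 1)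

def charFun [DecidableEq V] (U : Finset V) : V → Fin 2 := fun x => if x ∈ U then 1 else 0

@[simp] lemma ones_charFun [DecidableEq V] (U : Finset V) : ones (charFun U) = U := by
  ext x; by_cases hx : x ∈ U <;> simp [ones, charFun, hx]

lemma forall_eq_zero_iff_disjoint_ones {f : V → Fin 2} {S : Finset V} :
    (∀ x ∈ S, f x = 0) ↔ Disjoint S (ones f) := by
  simp only [disjoint_left, ones, mem_filter, mem_univ, true_and]
  exact forall₂_congr fun x _ => by omega

end Indicator

namespace IsBisector

variable {n k : ℕ} {α : ℝ} {F : Finset (Fin n → Fin 2)}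

lemma card_ones (hF : IsBisector n k α F) {f : Fin n → Fin 2} (hf : f ∈ F) :
    #(ones f) = ⌈α * n⌉₊ :=
  hF.1 f hf

lemma exists_disjoint_ones (hF : IsBisector n k α F) (hkn : k ≤ n) {S : Finset (Fin n)}
    (hS : #S ≤ k) : ∃ f ∈ F, Disjoint S (ones f) := by
  obtain ⟨K, hSK, -, hK⟩ := exists_subsuperset_card_eq (subset_univ S) hS (by simpa using hkn)
  obtain ⟨f, hf, hzero⟩ := hF.2 K hK
  exact ⟨f, hf, (forall_eq_zero_iff_disjoint_ones.mp hzero).mono_left hSK⟩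

end IsBisector

lemma isBisector_image_charFun {n k : ℕ} {α : ℝ} {𝒰 : Finset (Finset (Fin n))}
    (hcard : ∀ U ∈ 𝒰, #U = ⌈α * n⌉₊)
    (hcover : ∀ S : Finset (Fin n), #S ≤ k → ∃ U ∈ 𝒰, Disjoint S U) :
    IsBisector n k α (𝒰.image charFun) := by
  refine ⟨?_, fun S hS => ?_⟩
  · simp only [mem_image, forall_exists_index, and_imp, forall_apply_eq_imp_iff₂]
    intro U hU
    show #(ones (charFun U)) = _
    rw [ones_charFun, hcard U hU]
  · obtain ⟨U, hU, hSU⟩ := hcover S hS.le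
    refine ⟨charFun U, mem_image_of_mem _ hU, forall_eq_zero_iff_disjoint_ones.mpr ?_⟩
    rwa [ones_charFun]

section BlowUp

variable {β γ δ : Type*} [Fintype β] (ι : β × γ ↪ δ)

def blowUp (T : Finset γ) : Finset δ := (univ ×ˢ T).map ι

lemma card_blowUp (T : Finset γ) : #(blowUp ι T) = Fintype.card β * #T := by
  simp [blowUp]

lemma disjoint_blowUp [DecidableEq γ] {S : Finset δ} {T : Finset γ}
    (h : Disjoint ((S.preimage ι ι.injective.injOn).image Prod.snd) T) :
    Disjoint S (blowUp ι T) := by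
  rw [disjoint_left] at h ⊢
  intro x hxS hxT
  obtain ⟨⟨i, y⟩, hp, rfl⟩ := mem_map.mp hxT
  exact h (mem_image_of_mem Prod.snd (mem_preimage.mpr hxS)) (mem_product.mp hp).2

lemma exists_blowUp_family {k m m' : ℕ} {𝒯 : Finset (Finset γ)} (hcard : ∀ T ∈ 𝒯, #T = m)
    (hcover : ∀ S : Finset γ, #S ≤ k → ∃ T ∈ 𝒯, Disjoint S T) (hm : m' ≤ Fintype.card β * m) :
    ∃ 𝒱 : Finset (Finset δ), (∀ V ∈ 𝒱, #V = m' ∧ ↑V ⊆ Set.range ι) ∧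
      (∀ S : Finset δ, #S ≤ k → ∃ V ∈ 𝒱, Disjoint S V) ∧ #𝒱 ≤ #𝒯 := by
  classical
  have hP : ∀ T ∈ 𝒯, ∃ P ⊆ blowUp ι T, #P = m' := fun T hT =>
    exists_subset_card_eq (by rw [card_blowUp, hcard T hT]; exact hm)
  choose P hPsub hPcard using hP
  refine ⟨𝒯.attach.image fun T => P T.1 T.2, ?_, fun S hS => ?_, ?_⟩
  · simp only [mem_image, mem_attach, true_and, Subtype.exists, forall_exists_index]
    rintro _ T hT rfl
    refine ⟨hPcard T hT, fun x hx => ?_⟩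
    obtain ⟨p, -, rfl⟩ := mem_map.mp (hPsub T hT hx)
    exact Set.mem_range_self p
  · have hQ : #((S.preimage ι ι.injective.injOn).image Prod.snd) ≤ k :=
      card_image_le.trans ((card_preimage _ _ _).trans_le (card_filter_le _ _) |>.trans hS)
    obtain ⟨T, hT, hdisj⟩ := hcover _ hQ
    exact ⟨P T hT, mem_image_of_mem _ (mem_attach _ ⟨T, hT⟩),
      (disjoint_blowUp ι hdisj).mono_right (hPsub T hT)⟩
  · exact card_image_le.trans (card_attach).le

end BlowUp

section Rotation

variable {G : Type*} [AddGroup G] [DecidableEq G] {ι : Type*} [Fintype ι]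

lemma exists_vadd_union_family {k m : ℕ} {𝒱 : Finset (Finset G)} {E : Finset G} {c : ι → G}
    (hcard : ∀ V ∈ 𝒱, #V = m ∧ Disjoint V E)
    (hcover : ∀ S : Finset G, #S ≤ k → ∃ V ∈ 𝒱, Disjoint S V)
    (hE : Pairwise (Disjoint on fun i => c i +ᵥ E)) (hk : k < Fintype.card ι) :
    ∃ 𝒰 : Finset (Finset G), (∀ U ∈ 𝒰, #U = m + #E) ∧
      (∀ S : Finset G, #S ≤ k → ∃ U ∈ 𝒰, Disjoint S U) ∧ #𝒰 ≤ Fintype.card ι * #𝒱 := by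
  refine ⟨(𝒱 ×ˢ univ).image fun p => c p.2 +ᵥ (p.1 ∪ E), ?_, fun S hS => ?_, ?_⟩
  · simp only [mem_image, mem_product, mem_univ, and_true, Prod.exists, forall_exists_index,
      and_imp]
    rintro _ V i hV rfl
    rw [card_vadd_finset, card_union_of_disjoint (hcard V hV).2, (hcard V hV).1]
  · obtain ⟨i, hi⟩ := exists_disjoint_of_card_lt hE (hS.trans_lt hk)
    obtain ⟨V, hV, hSV⟩ := hcover (-c i +ᵥ S) (by rwa [card_vadd_finset])
    refine ⟨c i +ᵥ (V ∪ E), mem_image.mpr ⟨(V, i), mem_product.mpr ⟨hV, mem_univ i⟩, rfl⟩, ?_⟩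
    rw [vadd_finset_union, disjoint_union_right]
    exact ⟨disjoint_vadd_finset_right.mpr hSV, hi⟩
  · calc _ ≤ #(𝒱 ×ˢ (univ : Finset ι)) := card_image_le
      _ = _ := by rw [card_product, card_univ, mul_comm]

end Rotation

def blockEmb {n q m e : ℕ} (h : e + q * m ≤ n) : Fin q × Fin m ↪ Fin n :=
  finProdFinEquiv.toEmbedding.trans ((Fin.natAddEmb e).trans (Fin.castLEEmb h))

lemma le_val_blockEmb {n q m e : ℕ} (h : e + q * m ≤ n) (p : Fin q × Fin m) :
    e ≤ (blockEmb h p : ℕ) := by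
  simp [blockEmb]

section Cyclic

open scoped Fin.NatCast

variable {n : ℕ} [NeZero n]

lemma card_image_natCast_range {e : ℕ} (he : e ≤ n) :
    #((range e).image (Nat.cast : ℕ → Fin n)) = e := by
  rw [card_image_of_injOn, card_range]
  intro s hs t ht hst
  rw [coe_range, Set.mem_Iio] at hs ht
  rw [← Fin.val_cast_of_lt (n := n) (hs.trans_le he), hst, Fin.val_cast_of_lt (ht.trans_le he)]

lemma pairwise_disjoint_vadd_image_natCast_range {e k : ℕ} (h : (k + 1) * e ≤ n) :
    Pairwise (Disjoint on fun j : Fin (k + 1) =>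
      ((j * e : ℕ) : Fin n) +ᵥ (range e).image (Nat.cast : ℕ → Fin n)) := by
  have hval : ∀ (j : Fin (k + 1)) (t : ℕ), t < e →
      ((((j * e : ℕ) : Fin n) +ᵥ (t : Fin n) : Fin n) : ℕ) = j * e + t := by
    intro j t ht
    rw [vadd_eq_add, ← Nat.cast_add, Fin.val_cast_of_lt]
    calc (j : ℕ) * e + t < (j + 1) * e := by rw [add_one_mul]; omega
      _ ≤ (k + 1) * e := Nat.mul_le_mul_right _ (by omega)
      _ ≤ n := h
  have key : ∀ (i j : Fin (k + 1)) (s t : ℕ), i < j → s < e → t < e →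
      (i : ℕ) * e + s ≠ j * e + t := by
    intro i j s t hij hs ht
    have : ((i : ℕ) + 1) * e ≤ j * e := Nat.mul_le_mul_right _ hij
    rw [add_one_mul] at this
    omega
  intro i j hij
  rw [onFun, disjoint_left]
  simp only [mem_vadd_finset, mem_image, mem_range, exists_exists_and_eq_and]
  rintro _ ⟨s, hs, rfl⟩ ⟨t, ht, hst⟩
  have := congrArg Fin.val hst
  rw [hval i s hs, hval j t ht] at this
  rcases lt_or_gt_of_ne hij with hlt | hlt
  · exact key i j s t hlt hs ht this.symm
  · exact key j i t s hlt ht hs this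

lemma disjoint_image_natCast_range_of_subset_range_blockEmb {q m e : ℕ} (h : e + q * m ≤ n)
    {V : Finset (Fin n)} (hV : ↑V ⊆ Set.range (blockEmb h)) :
    Disjoint V ((range e).image (Nat.cast : ℕ → Fin n)) := by
  rw [disjoint_left]
  intro x hxV hxE
  obtain ⟨p, rfl⟩ := hV hxV
  obtain ⟨t, ht, htx⟩ := mem_image.mp hxE
  rw [mem_range] at ht
  have hval : t = (blockEmb h p : ℕ) := by
    rw [← htx, Fin.val_cast_of_lt (by omega)]
  have := le_val_blockEmb h p
  omega

end Cyclic

theorem bisector_extend_universe_general (n₁ n₂ k : ℕ) (hkn : k ≤ n₂)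
    (hmod : (k + 1) * (n₁ % n₂) < n₁ / n₂ * n₂)
    (α : ℝ) (hα1 : α ≤ 1)
    (F : Finset (Fin n₂ → Fin 2)) (hF : IsBisector n₂ k α F) :
    ∃ F' : Finset (Fin n₁ → Fin 2),
      IsBisector n₁ k α F' ∧ F'.card ≤ (k + 1) * F.card := by
  classical
  have hceil := Nat.ceil_mul_le_div_mul_ceil_add_mod hα1 n₁ n₂
  have hqr := Nat.div_add_mod' n₁ n₂
  set q := n₁ / n₂
  set e := ⌈α * n₁⌉₊ - q * ⌈α * n₂⌉₊
  have hblocks : e + q * n₂ ≤ n₁ := by omega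
  have hwindows : (k + 1) * e ≤ n₁ :=
    (Nat.mul_le_mul_left _ (show e ≤ n₁ % n₂ by omega)).trans (hmod.le.trans (by omega))
  have : NeZero n₁ := ⟨by omega⟩
  obtain ⟨𝒱, h𝒱, h𝒱cover, h𝒱card⟩ := exists_blowUp_family (blockEmb hblocks)
    (𝒯 := F.image ones) (m' := ⌈α * n₁⌉₊ - e) (by simpa using fun f hf => hF.card_ones hf)
    (fun S hS => by simpa using hF.exists_disjoint_ones hkn hS) (by rw [Fintype.card_fin]; omega)
  obtain ⟨𝒰, h𝒰, h𝒰cover, h𝒰card⟩ := exists_vadd_union_family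
    (fun V hV => ⟨(h𝒱 V hV).1,
      disjoint_image_natCast_range_of_subset_range_blockEmb hblocks (h𝒱 V hV).2⟩)
    h𝒱cover (pairwise_disjoint_vadd_image_natCast_range hwindows) (by simp)
  refine ⟨𝒰.image charFun, isBisector_image_charFun (fun U hU => ?_) h𝒰cover, ?_⟩
  · rw [h𝒰 U hU, card_image_natCast_range (hwindows.trans' (Nat.le_mul_of_pos_left e k.succ_pos))]
    omega
  · calc #(𝒰.image charFun) ≤ #𝒰 := card_image_le
      _ ≤ (k + 1) * #𝒱 := by simpa using h𝒰card
      _ ≤ (k + 1) * #F := Nat.mul_le_mul_left _ (h𝒱card.trans card_image_le)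

/-- If `k ≤ n₂ ≤ n₁`, `(k+1)·(n₁ mod n₂) < ⌊n₁/n₂⌋·n₂` and there is an
`(n₂,k,α)`-bisector `F`, then there is an `(n₁,k,α)`-bisector of size at most
`(k+1)·|F|`. -/
theorem bisector_extend_universe (n₁ n₂ k : ℕ) (hk : 0 < k) (hkn : k ≤ n₂)
    (hn : n₂ ≤ n₁) (hmod : (k + 1) * (n₁ % n₂) < n₁ / n₂ * n₂)
    (α : ℝ) (hα0 : 0 ≤ α) (hα1 : α ≤ 1)
    (F : Finset (Fin n₂ → Fin 2)) (hF : IsBisector n₂ k α F) :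
    ∃ F' : Finset (Fin n₁ → Fin 2),
      IsBisector n₁ k α F' ∧ F'.card ≤ (k + 1) * F.card :=
  bisector_extend_universe_general n₁ n₂ k hkn hmod α hα1 F hF
end

section
/- Let k ≥ 16 be an integer and n an integer with n ≥ k⁴. Then there exists an (n, k, 1/√k)-bisector of size at most 6·k·(k+1)·e^{√k}·ln k. -/
open Finset

/-!
Cut `[n]` into `k²` blocks of at least `b = ⌊n/k²⌋` points and let `s = ⌊m/b⌋ + 1`, where
`m = ⌈n/√k⌉`, so that `s ≤ √k³ + 2` blocks carry at least `m` points. A uniformly random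
`s`-set of blocks misses a fixed `k`-set of blocks with probability
`C(k²-k, s)/C(k², s) ≥ ((k²-s-k)/(k²-s))^s ≥ e^{-(√k+3)}`, and there are at most
`C(k², k) ≤ e^{2k ln k}` such `k`-sets. By the union bound,
`N = ⌈(2k ln k + 1) e^{√k+3}⌉` random `s`-sets of blocks contain, for every `k`-set of blocks,
one disjoint from it. Each of them yields a function supported on `m` points of its blocks;
a `k`-subset of `[n]` meets at most `k` blocks, so one of these functions vanishes on it.
-/

open Real

theorem Nat.choose_mul_pow_sub_le {b s d : ℕ} (h : s + d ≤ b) :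
    b.choose s * (b - s - d) ^ s ≤ (b - d).choose s * (b - s) ^ s := by
  have hfac : ∀ i ∈ range s, (b - i) * (b - s - d) ≤ (b - d - i) * (b - s) := by
    intro i hi
    have hi : i < s := mem_range.1 hi
    rw [Nat.sub_sub, Nat.sub_sub]
    zify [show i ≤ b by omega, show s + d ≤ b by omega, show d + i ≤ b by omega,
      show s ≤ b by omega]
    nlinarith
  have := prod_le_prod' hfac
  rw [prod_mul_distrib, prod_mul_distrib, prod_const, prod_const, card_range,
    ← Nat.descFactorial_eq_prod_range, ← Nat.descFactorial_eq_prod_range,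
    Nat.descFactorial_eq_factorial_mul_choose, Nat.descFactorial_eq_factorial_mul_choose,
    mul_assoc, mul_assoc] at this
  exact Nat.le_of_mul_le_mul_left this s.factorial_pos

theorem Real.exp_neg_sub_div_le_div {x y : ℝ} (hx : 0 < x) (hy : 0 < y) :
    exp (-((x - y) / y)) ≤ y / x := by
  have hexp : x / y ≤ exp ((x - y) / y) := by
    have : (x - y) / y + 1 = x / y := by field_simp; ring
    linarith [add_one_le_exp ((x - y) / y)]
  rw [exp_neg, ← inv_div x y]
  exact inv_anti₀ (by positivity) hexp

theorem exp_neg_mul_choose_le_choose_sub {b s d : ℕ} (h : s + d < b) :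
    exp (-(s * d / (b - s - d) : ℝ)) * b.choose s ≤ (b - d).choose s := by
  have hY : (0 : ℝ) < b - s - d := by
    have : ((s + d : ℕ) : ℝ) < b := by exact_mod_cast h
    push_cast at this; linarith
  have hX : (0 : ℝ) < b - s := by linarith [Nat.cast_nonneg (α := ℝ) d]
  have hratio : ((b - s - d : ℝ) / (b - s)) ^ s * b.choose s ≤ (b - d).choose s := by
    have key := Nat.cast_le (α := ℝ).2 (Nat.choose_mul_pow_sub_le h.le)
    rw [Nat.sub_sub] at key
    push_cast [Nat.cast_sub h.le, Nat.cast_sub (show s ≤ b by omega),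
      Nat.cast_sub (show d ≤ b by omega)] at key
    rw [← sub_sub] at key
    rw [div_pow, div_mul_eq_mul_div, div_le_iff₀ (by positivity)]
    linarith
  calc exp (-(s * d / (b - s - d) : ℝ)) * b.choose s
      = exp (-((b - s - (b - s - d)) / (b - s - d) : ℝ)) ^ s * b.choose s := by
        rw [← exp_nat_mul]; congr 2; ring
    _ ≤ ((b - s - d : ℝ) / (b - s)) ^ s * b.choose s := by
        gcongr; exact exp_neg_sub_div_le_div hX hY
    _ ≤ _ := hratio

theorem choose_mul_choose_sub_pow_lt {t s k N : ℕ} {q : ℝ} (hs : s ≤ t)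
    (hq : q * t.choose s ≤ (t - k).choose s) (hN : (t.choose k : ℝ) < exp (N * q)) :
    t.choose k * (t.choose s - (t - k).choose s) ^ N < t.choose s ^ N := by
  have hC : (0 : ℝ) < t.choose s := by exact_mod_cast Nat.choose_pos hs
  have hbad : ((t.choose s - (t - k).choose s : ℕ) : ℝ) ≤ exp (-q) * t.choose s := by
    rw [Nat.cast_sub (Nat.choose_le_choose s (Nat.sub_le t k))]
    nlinarith [add_one_le_exp (-q)]
  have hreal : (t.choose k : ℝ) * ((t.choose s - (t - k).choose s : ℕ) : ℝ) ^ N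
      < (t.choose s : ℝ) ^ N :=
    calc (t.choose k : ℝ) * ((t.choose s - (t - k).choose s : ℕ) : ℝ) ^ N
        ≤ t.choose k * (exp (-q) * t.choose s) ^ N := by gcongr
      _ = t.choose k / exp (N * q) * (t.choose s : ℝ) ^ N := by
        rw [mul_pow, ← exp_nat_mul, mul_neg, exp_neg]; ring
      _ < 1 * (t.choose s : ℝ) ^ N := by
        gcongr
        rwa [div_lt_one (exp_pos _)]
      _ = _ := one_mul _
  exact_mod_cast hreal

theorem exists_family_disjoint_of_card (α : Type*) [Fintype α] [DecidableEq α] {s k N : ℕ}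
    (h : (Fintype.card α).choose k
        * ((Fintype.card α).choose s - (Fintype.card α - k).choose s) ^ N
      < (Fintype.card α).choose s ^ N) :
    ∃ g : Fin N → Finset α, (∀ i, #(g i) = s) ∧ ∀ T : Finset α, #T = k → ∃ i, Disjoint (g i) T := by
  set t := Fintype.card α
  let meeting (T : Finset α) : Finset (Finset α) := powersetCard s univ \ powersetCard s Tᶜ
  have hmeeting (T : Finset α) (hT : #T = k) :
      #(meeting T) = t.choose s - (t - k).choose s := by
    rw [card_sdiff_of_subset (powersetCard_mono (subset_univ _)), card_powersetCard,
      card_powersetCard, card_compl, hT, card_univ]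
  have hcard : #((powersetCard k univ).biUnion fun T => Fintype.piFinset fun _ : Fin N => meeting T)
      < #(Fintype.piFinset fun _ : Fin N => powersetCard s (univ : Finset α)) := by
    calc _ ≤ ∑ T ∈ powersetCard k univ, #(Fintype.piFinset fun _ : Fin N => meeting T) :=
          card_biUnion_le
      _ = ∑ T ∈ powersetCard k (univ : Finset α), (t.choose s - (t - k).choose s) ^ N := by
          refine sum_congr rfl fun T hT => ?_
          simp [Fintype.card_piFinset, hmeeting T (mem_powersetCard.1 hT).2]
      _ < _ := by simpa [Fintype.card_piFinset] using h
  obtain ⟨g, hg, hg_not_meeting⟩ := exists_mem_notMem_of_card_lt_card hcard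
  rw [Fintype.mem_piFinset] at hg
  refine ⟨g, fun i => (mem_powersetCard.1 (hg i)).2, fun T hT => ?_⟩
  by_contra! hmeet
  refine hg_not_meeting (mem_biUnion.2 ⟨T, mem_powersetCard.2 ⟨subset_univ T, hT⟩,
    Fintype.mem_piFinset.2 fun i => mem_sdiff.2 ⟨hg i, fun hsub => ?_⟩⟩)
  exact hmeet i (subset_compl_iff_disjoint_right.1 (mem_powersetCard.1 hsub).1)

theorem Fin.exists_mul_card_le_card_preimage {n t b : ℕ} (ht : 0 < t) (hn : t * b ≤ n) :
    ∃ blk : Fin n → Fin t, ∀ A : Finset (Fin t), #A * b ≤ #{x | blk x ∈ A} := by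
  refine ⟨fun x => ⟨min (x / b) (t - 1), by omega⟩, fun A => ?_⟩
  let e : Fin t × Fin b → Fin n := fun p => Fin.castLE hn (finProdFinEquiv p)
  have he (p : Fin t × Fin b) : min ((e p : ℕ) / b) (t - 1) = p.1 := by
    have hb : 0 < b := p.2.pos
    simp only [e, Fin.val_castLE, finProdFinEquiv_apply_val, Nat.add_mul_div_left _ _ hb,
      Nat.div_eq_of_lt p.2.isLt, zero_add]
    omega
  calc #A * b = #(A ×ˢ (univ : Finset (Fin b))) := by simp
    _ ≤ _ := by
      refine card_le_card_of_injOn e (fun p hp => ?_) ?_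
      · simpa [Fin.ext_iff, he] using (mem_product.1 hp).1
      · exact ((Fin.castLE_injective hn).comp finProdFinEquiv.injective).injOn

theorem exists_isBisector_of_family {n k t b s N : ℕ} {α : ℝ} (ht : 0 < t) (hkt : k ≤ t)
    (hn : t * b ≤ n) (hα : ⌈α * n⌉₊ ≤ s * b) (g : Fin N → Finset (Fin t))
    (hg_card : ∀ i, #(g i) = s) (hg : ∀ T : Finset (Fin t), #T = k → ∃ i, Disjoint (g i) T) :
    ∃ F, IsBisector n k α F ∧ #F ≤ N := by
  obtain ⟨blk, hblk⟩ := Fin.exists_mul_card_le_card_preimage ht hn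
  have hsupp (i : Fin N) : ∃ O ⊆ ({x | blk x ∈ g i} : Finset (Fin n)), #O = ⌈α * n⌉₊ :=
    exists_subset_card_eq (hα.trans (hg_card i ▸ hblk (g i)))
  choose O hO_sub hO_card using hsupp
  let f (i : Fin N) (x : Fin n) : Fin 2 := if x ∈ O i then 1 else 0
  refine ⟨univ.image f, ⟨?_, fun S hS => ?_⟩, card_image_le.trans (by simp)⟩
  · simp only [mem_image, mem_univ, true_and, forall_exists_index, forall_apply_eq_imp_iff]
    intro i
    convert hO_card i
    ext x
    by_cases hx : x ∈ O i <;> simp [f, hx]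
  · obtain ⟨T, hST, -, hT⟩ := exists_subsuperset_card_eq (subset_univ (S.image blk))
      (card_image_le.trans hS.le) (by simpa using hkt)
    obtain ⟨i, hi⟩ := hg T hT
    refine ⟨f i, mem_image_of_mem f (mem_univ i), fun x hx => ?_⟩
    have hxO : x ∉ O i := fun hxO =>
      disjoint_left.1 hi (mem_filter.1 (hO_sub i hxO)).2 (hST (mem_image_of_mem blk hx))
    simp [f, hxO]

theorem ceil_div_sqrt_div_add_one_le {k n : ℕ} (hk : 16 ≤ k) (hn : k ^ 4 ≤ n) :
    ((⌈1 / √k * n⌉₊ / (n / k ^ 2) + 1 : ℕ) : ℝ) ≤ √k ^ 3 + 2 := by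
  set u := √(k : ℝ)
  have hku : (k : ℝ) = u ^ 2 := (sq_sqrt (Nat.cast_nonneg k)).symm
  have hu : 4 ≤ u := le_sqrt_of_sq_le (by norm_num; exact_mod_cast hk)
  set b := n / k ^ 2
  set m := ⌈1 / u * n⌉₊
  have hk2 : 0 < k ^ 2 := by positivity
  have hb_pos : 0 < b := Nat.div_pos ((Nat.pow_le_pow_right (by omega) (by norm_num)).trans hn) hk2
  have hn_lt : (n : ℝ) < (b + 1) * u ^ 4 := by
    have := Nat.lt_div_mul_add (a := n) hk2
    have : (n : ℝ) < b * k ^ 2 + k ^ 2 := by exact_mod_cast this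
    rw [hku] at this; linarith
  have hnu : u ^ 8 ≤ (n : ℝ) := by
    have : ((k ^ 4 : ℕ) : ℝ) ≤ n := by exact_mod_cast hn
    push_cast at this; rw [hku] at this; linarith
  have hb : u ^ 3 + 1 ≤ (b : ℝ) := by
    have : u ^ 4 < b + 1 := lt_of_mul_lt_mul_right (by nlinarith) (by positivity : 0 ≤ u ^ 4)
    nlinarith [pow_le_pow_left₀ (by norm_num) hu 3]
  have hm : (m : ℝ) < n / u + 1 := by
    simpa [m, div_eq_inv_mul] using Nat.ceil_lt_add_one (by positivity : 0 ≤ 1 / u * n)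
  have hmb : (m : ℝ) ≤ (u ^ 3 + 1) * b := by
    have : (n : ℝ) / u < (b + 1) * u ^ 3 := by
      rw [div_lt_iff₀ (by positivity)]; linarith
    nlinarith
  push_cast
  have := Nat.cast_div_le (α := ℝ) (m := m) (n := b)
  have : (m : ℝ) / b ≤ u ^ 3 + 1 := by rwa [div_le_iff₀ (by exact_mod_cast hb_pos)]
  linarith

theorem add_lt_sq_of_le_sqrt_pow {k s : ℕ} (hk : 16 ≤ k) (hs : (s : ℝ) ≤ √k ^ 3 + 2) :
    s + k < k ^ 2 := by
  have hku : (k : ℝ) = √k ^ 2 := (sq_sqrt (Nat.cast_nonneg k)).symm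
  have hu : 4 ≤ √(k : ℝ) := le_sqrt_of_sq_le (by norm_num; exact_mod_cast hk)
  have : (s : ℝ) + k < (k : ℝ) ^ 2 := by
    rw [hku]; nlinarith [pow_le_pow_left₀ (by norm_num) hu 3]
  exact_mod_cast this

theorem exp_neg_mul_choose_sq_le {k s : ℕ} (hk : 16 ≤ k) (hs : (s : ℝ) ≤ √k ^ 3 + 2) :
    exp (-(√k + 3)) * (k ^ 2).choose s ≤ (k ^ 2 - k).choose s := by
  have hsk := add_lt_sq_of_le_sqrt_pow hk hs
  refine le_trans ?_ (exp_neg_mul_choose_le_choose_sub hsk)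
  gcongr
  set u := √(k : ℝ)
  have hku : (k : ℝ) = u ^ 2 := (sq_sqrt (Nat.cast_nonneg k)).symm
  have hu : 4 ≤ u := le_sqrt_of_sq_le (by norm_num; exact_mod_cast hk)
  have hY : u ^ 4 - u ^ 3 - u ^ 2 - 2 ≤ ((k ^ 2 : ℕ) : ℝ) - s - k := by
    push_cast; rw [hku]; linarith
  have hY_pos : 0 < u ^ 4 - u ^ 3 - u ^ 2 - 2 := by nlinarith [pow_le_pow_left₀ (by norm_num) hu 3]
  rw [div_le_iff₀ (hY_pos.trans_le hY), hku]
  nlinarith [pow_le_pow_left₀ (by norm_num) hu 3, mul_le_mul_of_nonneg_left hs (sq_nonneg u)]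

theorem choose_sq_self_lt_exp {k : ℕ} {N : ℝ} (hk : 0 < k) (hN : 2 * k * log k + 1 ≤ N) :
    ((k ^ 2).choose k : ℝ) < exp N := by
  calc ((k ^ 2).choose k : ℝ) ≤ ((k ^ 2 : ℕ) : ℝ) ^ k := by exact_mod_cast Nat.choose_le_pow _ _
    _ = exp (2 * k * log k) := by
      rw [← exp_log (by positivity : (0 : ℝ) < ((k ^ 2 : ℕ) : ℝ) ^ k), log_pow]
      push_cast; rw [log_pow]; ring_nf
    _ < exp N := exp_lt_exp.2 (by linarith)

theorem ceil_mul_exp_le {k : ℕ} (hk : 16 ≤ k) :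
    (⌈(2 * k * log k + 1) * exp (√k + 3)⌉₊ : ℝ) ≤ 6 * k * (k + 1) * exp √k * log k := by
  have hkR : (16 : ℝ) ≤ k := by exact_mod_cast hk
  have hL : 1 ≤ log k := by
    rw [le_log_iff_exp_le (by positivity)]; linarith [exp_one_lt_d9]
  have he3 : exp 3 ≤ 21 := by
    have : exp 3 = exp 1 ^ 3 := by rw [← exp_nat_mul]; norm_num
    rw [this]
    nlinarith [pow_le_pow_left₀ (exp_pos 1).le exp_one_lt_d9.le 3]
  set E := exp √(k : ℝ)
  set L := log (k : ℝ)
  have hE : 1 ≤ E := one_le_exp (sqrt_nonneg _)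
  refine (?_ : _ < _).le
  calc (⌈(2 * k * L + 1) * exp (√k + 3)⌉₊ : ℝ) < (2 * k * L + 1) * (E * exp 3) + 1 := by
        rw [← exp_add]; exact Nat.ceil_lt_add_one (by positivity)
    _ ≤ (2 * k * L + 1) * (E * 21) + 1 := by gcongr
    _ ≤ 6 * k * (k + 1) * E * L := by
        have hkL : 16 ≤ k * L := by nlinarith
        have hkLE : 16 * E ≤ k * L * E := mul_le_mul_of_nonneg_right hkL (by positivity)
        nlinarith [mul_le_mul_of_nonneg_right hkR (by positivity : 0 ≤ k * L * E)]

/-- For `k ≥ 16` and `n ≥ k⁴` there is an `(n,k,1/√k)`-bisector of size at most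
`6·k·(k+1)·e^{√k}·ln k`. -/
theorem bisector_sqrt_k (k n : ℕ) (hk : 16 ≤ k) (hn : k ^ 4 ≤ n) :
    ∃ F : Finset (Fin n → Fin 2),
      IsBisector n k (1 / Real.sqrt k) F ∧
        (F.card : ℝ) ≤
          6 * (k : ℝ) * ((k : ℝ) + 1) * Real.exp (Real.sqrt k) * Real.log k := by
  set b := n / k ^ 2
  set s := ⌈1 / √k * n⌉₊ / b + 1
  set N := ⌈(2 * k * log k + 1) * exp (√k + 3)⌉₊
  have hb : 0 < b := Nat.div_pos ((Nat.pow_le_pow_right (by omega) (by norm_num)).trans hn)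
    (by positivity)
  have hs : (s : ℝ) ≤ √k ^ 3 + 2 := ceil_div_sqrt_div_add_one_le hk hn
  have hNq : 2 * k * log k + 1 ≤ N * exp (-(√k + 3)) := by
    rw [exp_neg, ← div_eq_mul_inv, le_div_iff₀ (exp_pos _)]
    exact Nat.le_ceil _
  have hsk := add_lt_sq_of_le_sqrt_pow hk hs
  have hcount := choose_mul_choose_sub_pow_lt (s := s) (by omega)
    (exp_neg_mul_choose_sq_le hk hs) (choose_sq_self_lt_exp (by omega) hNq)
  obtain ⟨g, hg_card, hg⟩ := exists_family_disjoint_of_card (Fin (k ^ 2)) (by simpa using hcount)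
  have hm : ⌈1 / √k * n⌉₊ ≤ s * b := by
    simpa only [s, add_mul, one_mul] using (Nat.lt_div_mul_add hb).le
  obtain ⟨F, hF, hFN⟩ := exists_isBisector_of_family (by positivity) (by nlinarith)
    (Nat.mul_div_le n (k ^ 2)) hm g hg_card hg
  exact ⟨F, hF, (Nat.cast_le.2 hFN).trans (ceil_mul_exp_le hk)⟩
end
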